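/- arXiv:2208.06595 — 7 statements merged into one kernel-verified Lean document; each statement's English description precedes it below -/
import Mathlib

section
/- There exists a constant c > 0, depending only on C₃, C₅, C₆, C₇, η₁, η₂, such that ‖A_t(x) − A_t(y)‖ ≤ c e^{c|t|} |x − y|^{η₁ ∧ η₂} for all t ∈ ℝ and all x, y ∈ ℝ^d. -/
open Real Set
section
variable {E : Type*} [NormedAddCommGroup E] [NormedSpace ℝ E]

lemma gron_nonneg
    (f f' : ℝ → E) (K δ ε : ℝ) (hK : 0 < K) (hε : 0 ≤ ε)
    (t : ℝ) (ht : 0 ≤ t)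
    (hd : ∀ s ∈ Icc 0 t, HasDerivAt f (f' s) s)
    (hb : ∀ s ∈ Icc 0 t, ‖f' s‖ ≤ K * ‖f s‖ + ε)
    (h0 : ‖f 0‖ ≤ δ) :
    ‖f t‖ ≤ (δ + ε / K) * Real.exp (K * t) := by
  have hcont : ContinuousOn f (Icc 0 t) := fun s hs => ((hd s hs).continuousAt).continuousWithinAt
  have key := norm_le_gronwallBound_of_norm_deriv_right_le (f := f) (f' := f')
    hcont (fun s hs => ((hd s (Ico_subset_Icc_self hs)).hasDerivWithinAt)) h0
    (fun s hs => hb s (Ico_subset_Icc_self hs)) t (right_mem_Icc.2 ht)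
  have h1 : gronwallBound δ K ε (t - 0) ≤ (δ + ε / K) * Real.exp (K * t) := by
    rw [gronwallBound_of_K_ne_0 hK.ne']
    simp only [sub_zero]
    have h2 : ε / K * (Real.exp (K * t) - 1) ≤ ε / K * Real.exp (K * t) := by
      apply mul_le_mul_of_nonneg_left _ (div_nonneg hε hK.le)
      linarith
    nlinarith [Real.exp_pos (K * t)]
  exact key.trans h1

lemma gron
    (f f' : ℝ → E) (K δ ε : ℝ) (hK : 0 < K) (hε : 0 ≤ ε)
    (t : ℝ)
    (hd : ∀ s : ℝ, HasDerivAt f (f' s) s)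
    (hb : ∀ s : ℝ, |s| ≤ |t| → ‖f' s‖ ≤ K * ‖f s‖ + ε)
    (h0 : ‖f 0‖ ≤ δ) :
    ‖f t‖ ≤ (δ + ε / K) * Real.exp (K * |t|) := by
  rcases le_total 0 t with ht | ht
  · rw [abs_of_nonneg ht]
    refine gron_nonneg f f' K δ ε hK hε t ht (fun s _ => hd s) (fun s hs => hb s ?_) h0
    rw [abs_of_nonneg ht, abs_of_nonneg hs.1]; exact hs.2
  · rw [abs_of_nonpos ht]
    have hd' : ∀ s : ℝ, HasDerivAt (fun s => f (-s)) ((-1 : ℝ) • f' (-s)) s := by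
      intro s
      exact (hd (-s)).scomp s (hasDerivAt_neg s)
    have := gron_nonneg (fun s => f (-s)) (fun s => (-1 : ℝ) • f' (-s)) K δ ε hK hε (-t)
      (by linarith) (fun s _ => hd' s)
      (fun s hs => by
        simp only [norm_smul, norm_neg, norm_one]
        rw [one_mul]
        refine hb (-s) ?_
        rw [abs_neg, abs_of_nonpos ht, abs_of_nonneg hs.1]; exact hs.2)
      (by simpa using h0)
    simpa using this

variable (C₆ : ℝ) (hC₆ : 0 < C₆)
variable (b : E → E) (κ : ℝ → E → E) (Dκ : ℝ → E → (E →L[ℝ] E))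
variable (hbd : ∀ x, ‖fderiv ℝ b x‖ ≤ C₆)
variable (hκfd : ∀ (t : ℝ) (x : E), HasFDerivAt (κ t) (Dκ t x) x)
variable (hDκ0 : ∀ x, Dκ 0 x = ContinuousLinearMap.id ℝ E)
variable (hDκd : ∀ (t : ℝ) (x : E),
    HasDerivAt (fun s => Dκ s x) (-((fderiv ℝ b (κ t x)).comp (Dκ t x))) t)

include hC₆ hbd hDκ0 hDκd in
lemma Dκ_norm_le : ∀ (t : ℝ) (x : E), ‖Dκ t x‖ ≤ Real.exp (C₆ * |t|) := by
  intro t x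
  have h := gron (fun s => Dκ s x) (fun s => -((fderiv ℝ b (κ s x)).comp (Dκ s x)))
    C₆ 1 0 hC₆ le_rfl t (fun s => hDκd s x)
    (fun s _ => by
      rw [norm_neg, add_zero]
      exact le_trans (ContinuousLinearMap.opNorm_comp_le _ _)
        (mul_le_mul_of_nonneg_right (hbd _) (norm_nonneg _)))
    (by show ‖Dκ 0 x‖ ≤ 1; rw [hDκ0]; exact ContinuousLinearMap.norm_id_le)
  simpa using h

include hC₆ hbd hκfd hDκ0 hDκd in
lemma κ_lip : ∀ (t : ℝ) (x y : E), ‖κ t x - κ t y‖ ≤ Real.exp (C₆ * |t|) * ‖x - y‖ := by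
  intro t x y
  have := Convex.norm_image_sub_le_of_norm_hasFDerivWithin_le
    (f := κ t) (f' := Dκ t) (C := Real.exp (C₆ * |t|)) (s := (univ : Set E))
    (fun z _ => (hκfd t z).hasFDerivWithinAt)
    (fun z _ => Dκ_norm_le C₆ hC₆ b κ Dκ hbd hDκ0 hDκd t z)
    convex_univ (mem_univ y) (mem_univ x)
  simpa using this
variable (C₇ η₂ : ℝ) (hC₇ : 0 < C₇) (hη₂ : 0 < η₂)
variable (hbh : ∀ x y : E, ‖fderiv ℝ b x - fderiv ℝ b y‖ ≤ C₇ * ‖x - y‖ ^ η₂)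

include hC₆ hC₇ hη₂ hbd hbh hκfd hDκ0 hDκd in
lemma Dκ_holder : ∀ (t : ℝ) (x y : E), ‖Dκ t x - Dκ t y‖ ≤
    (C₇ / C₆) * Real.exp ((2 + η₂) * (C₆ * |t|)) * ‖x - y‖ ^ η₂ := by
  intro t x y
  set r := ‖x - y‖ with hr
  have hr0 : 0 ≤ r := norm_nonneg _
  set ε : ℝ := C₇ * Real.exp ((1 + η₂) * (C₆ * |t|)) * r ^ η₂ with hε
  have hε0 : 0 ≤ ε := by positivity
  have key := gron (fun s => Dκ s x - Dκ s y)
    (fun s => -((fderiv ℝ b (κ s x)).comp (Dκ s x)) - -((fderiv ℝ b (κ s y)).comp (Dκ s y)))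
    C₆ 0 ε hC₆ hε0 t
    (fun s => (hDκd s x).sub (hDκd s y))
    ?_ ?_
  · have hexp : (0:ℝ) + ε / C₆ = ε / C₆ := by ring
    calc ‖Dκ t x - Dκ t y‖ ≤ (0 + ε / C₆) * Real.exp (C₆ * |t|) := key
      _ = (C₇ / C₆) * Real.exp ((2 + η₂) * (C₆ * |t|)) * r ^ η₂ := by
          rw [hε, show (2 + η₂) * (C₆ * |t|) = (1 + η₂) * (C₆ * |t|) + C₆ * |t| by ring,
            Real.exp_add]
          field_simp
          ring
  · intro s hs
    have hsplit : -((fderiv ℝ b (κ s x)).comp (Dκ s x)) - -((fderiv ℝ b (κ s y)).comp (Dκ s y))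
        = -((fderiv ℝ b (κ s x)).comp (Dκ s x - Dκ s y))
          - ((fderiv ℝ b (κ s x) - fderiv ℝ b (κ s y)).comp (Dκ s y)) := by
      rw [ContinuousLinearMap.comp_sub, ContinuousLinearMap.sub_comp]
      abel
    rw [hsplit]
    have h1 : ‖-((fderiv ℝ b (κ s x)).comp (Dκ s x - Dκ s y))‖ ≤ C₆ * ‖Dκ s x - Dκ s y‖ := by
      rw [norm_neg]
      exact le_trans (ContinuousLinearMap.opNorm_comp_le _ _)
        (mul_le_mul_of_nonneg_right (hbd _) (norm_nonneg _))
    have h2 : ‖(fderiv ℝ b (κ s x) - fderiv ℝ b (κ s y)).comp (Dκ s y)‖ ≤ ε := by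
      have hA : ‖fderiv ℝ b (κ s x) - fderiv ℝ b (κ s y)‖ ≤
          C₇ * (Real.exp (η₂ * (C₆ * |s|)) * r ^ η₂) := by
        refine le_trans (hbh _ _) ?_
        have hk : ‖κ s x - κ s y‖ ^ η₂ ≤ Real.exp (η₂ * (C₆ * |s|)) * r ^ η₂ := by
          calc ‖κ s x - κ s y‖ ^ η₂ ≤ (Real.exp (C₆ * |s|) * r) ^ η₂ :=
                Real.rpow_le_rpow (norm_nonneg _)
                  (κ_lip C₆ hC₆ b κ Dκ hbd hκfd hDκ0 hDκd s x y) hη₂.le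
            _ = Real.exp (C₆ * |s|) ^ η₂ * r ^ η₂ := Real.mul_rpow (Real.exp_pos _).le hr0
            _ = Real.exp (η₂ * (C₆ * |s|)) * r ^ η₂ := by rw [← Real.exp_mul, mul_comm η₂]
        exact mul_le_mul_of_nonneg_left hk hC₇.le
      have hQ : ‖Dκ s y‖ ≤ Real.exp (C₆ * |s|) := Dκ_norm_le C₆ hC₆ b κ Dκ hbd hDκ0 hDκd s y
      calc ‖(fderiv ℝ b (κ s x) - fderiv ℝ b (κ s y)).comp (Dκ s y)‖
          ≤ ‖fderiv ℝ b (κ s x) - fderiv ℝ b (κ s y)‖ * ‖Dκ s y‖ :=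
            ContinuousLinearMap.opNorm_comp_le _ _
        _ ≤ (C₇ * (Real.exp (η₂ * (C₆ * |s|)) * r ^ η₂)) * Real.exp (C₆ * |s|) := by
            apply mul_le_mul hA hQ (norm_nonneg _) (by positivity)
        _ = C₇ * Real.exp ((1 + η₂) * (C₆ * |s|)) * r ^ η₂ := by
            rw [show (1 + η₂) * (C₆ * |s|) = η₂ * (C₆ * |s|) + C₆ * |s| by ring, Real.exp_add]
            ring
        _ ≤ ε := by
            rw [hε]
            have : Real.exp ((1 + η₂) * (C₆ * |s|)) ≤ Real.exp ((1 + η₂) * (C₆ * |t|)) := by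
              apply Real.exp_le_exp.2
              have : C₆ * |s| ≤ C₆ * |t| := mul_le_mul_of_nonneg_left hs hC₆.le
              nlinarith [abs_nonneg s, abs_nonneg t]
            have hrp : (0:ℝ) ≤ r ^ η₂ := by positivity
            exact mul_le_mul_of_nonneg_right (mul_le_mul_of_nonneg_left this hC₇.le) hrp
    calc ‖_ - _‖ ≤ ‖-((fderiv ℝ b (κ s x)).comp (Dκ s x - Dκ s y))‖
          + ‖(fderiv ℝ b (κ s x) - fderiv ℝ b (κ s y)).comp (Dκ s y)‖ := norm_sub_le _ _
      _ ≤ C₆ * ‖Dκ s x - Dκ s y‖ + ε := add_le_add h1 h2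
  · show ‖Dκ 0 x - Dκ 0 y‖ ≤ 0
    rw [hDκ0, hDκ0, sub_self, norm_zero]
end

/-- Spatial Hölder continuity of `A_t(x) = Dκ_t(χ_t(x)) A(χ_t(x))`
(where `χ_t = κ_{−t}` is the forward flow): there is `c > 0`, depending only on
`C₃, C₅, C₆, C₇, η₁, η₂`, such that
`‖A_t(x) − A_t(y)‖ ≤ c e^{c|t|} |x − y|^{η₁ ∧ η₂}` for all `t ∈ ℝ`, `x, y ∈ ℝ^d`. -/
theorem stmt7 (C₃ C₅ C₆ C₇ η₁ η₂ : ℝ) (hC₃ : 0 < C₃) (hC₅ : 0 < C₅)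
    (hC₆ : 0 < C₆) (hC₇ : 0 < C₇)
    (hη₁ : 0 < η₁) (hη₁' : η₁ ≤ 1) (hη₂ : 0 < η₂) (hη₂' : η₂ ≤ 1) :
    ∃ c > 0, ∀ (d : ℕ), 1 ≤ d →
      ∀ (b : EuclideanSpace ℝ (Fin d) → EuclideanSpace ℝ (Fin d)),
        Differentiable ℝ b →
        (∀ x, ‖fderiv ℝ b x‖ ≤ C₆) →
        (∀ x y, ‖fderiv ℝ b x - fderiv ℝ b y‖ ≤ C₇ * ‖x - y‖ ^ η₂) →
      ∀ (A : EuclideanSpace ℝ (Fin d) →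
          (EuclideanSpace ℝ (Fin d) →L[ℝ] EuclideanSpace ℝ (Fin d))),
        (∀ x, ‖A x‖ ≤ C₃) →
        (∀ x y, ‖A x - A y‖ ≤ C₅ * ‖x - y‖ ^ η₁) →
      ∀ (κ : ℝ → EuclideanSpace ℝ (Fin d) → EuclideanSpace ℝ (Fin d))
        (Dκ : ℝ → EuclideanSpace ℝ (Fin d) →
          (EuclideanSpace ℝ (Fin d) →L[ℝ] EuclideanSpace ℝ (Fin d))),
        (∀ x, κ 0 x = x) →
        (∀ (t : ℝ) (x : EuclideanSpace ℝ (Fin d)),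
          HasDerivAt (fun s => κ s x) (-(b (κ t x))) t) →
        (∀ (t : ℝ) (x : EuclideanSpace ℝ (Fin d)), HasFDerivAt (κ t) (Dκ t x) x) →
        (∀ x, Dκ 0 x = ContinuousLinearMap.id ℝ (EuclideanSpace ℝ (Fin d))) →
        (∀ (t : ℝ) (x : EuclideanSpace ℝ (Fin d)),
          HasDerivAt (fun s => Dκ s x) (-((fderiv ℝ b (κ t x)).comp (Dκ t x))) t) →
      ∀ (t : ℝ) (x y : EuclideanSpace ℝ (Fin d)),
        ‖(Dκ t (κ (-t) x)).comp (A (κ (-t) x)) - (Dκ t (κ (-t) y)).comp (A (κ (-t) y))‖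
          ≤ c * Real.exp (c * |t|) * ‖x - y‖ ^ min η₁ η₂ := by
  have hC37 : 0 < C₃ * C₇ / C₆ := by positivity
  refine ⟨2 * C₃ + C₃ * C₇ / C₆ + C₅ + 4 * C₆ + 1, by linarith, ?_⟩
  set c : ℝ := 2 * C₃ + C₃ * C₇ / C₆ + C₅ + 4 * C₆ + 1 with hcdef
  have hc : 0 < c := by rw [hcdef]; linarith
  intro d _hd b _hbdiff hbd hbh A hA hAh κ Dκ _hκ0 _hκd hκfd hDκ0 hDκd t x y
  set m : ℝ := min η₁ η₂ with hmdef
  have hm : 0 < m := lt_min hη₁ hη₂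
  set θ : ℝ := C₆ * |t| with hθdef
  have hθ : 0 ≤ θ := by positivity
  set x' := κ (-t) x with hx'
  set y' := κ (-t) y with hy'
  set P : ℝ := Real.exp (c * |t|) with hPdef
  have hP : 0 < P := Real.exp_pos _
  have hDn : ∀ z, ‖Dκ t z‖ ≤ Real.exp θ := fun z =>
    Dκ_norm_le C₆ hC₆ b κ Dκ hbd hDκ0 hDκd t z
  have hDH : ‖Dκ t x' - Dκ t y'‖ ≤ (C₇ / C₆) * Real.exp ((2 + η₂) * θ) * ‖x' - y'‖ ^ η₂ :=
    Dκ_holder C₆ hC₆ b κ Dκ hbd hκfd hDκ0 hDκd C₇ η₂ hC₇ hη₂ hbh t x' y'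
  have hE1 : ‖x' - y'‖ ≤ Real.exp θ * ‖x - y‖ := by
    have := κ_lip C₆ hC₆ b κ Dκ hbd hκfd hDκ0 hDκd (-t) x y
    rwa [abs_neg] at this
  have hLHS : ‖(Dκ t x').comp (A x') - (Dκ t y').comp (A y')‖
      ≤ ‖Dκ t x' - Dκ t y'‖ * ‖A x'‖ + ‖Dκ t y'‖ * ‖A x' - A y'‖ := by
    have hdecomp : (Dκ t x').comp (A x') - (Dκ t y').comp (A y')
        = (Dκ t x' - Dκ t y').comp (A x') + (Dκ t y').comp (A x' - A y') := by
      rw [ContinuousLinearMap.sub_comp, ContinuousLinearMap.comp_sub]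
      abel
    rw [hdecomp]
    exact (norm_add_le _ _).trans (add_le_add (ContinuousLinearMap.opNorm_comp_le _ _)
      (ContinuousLinearMap.opNorm_comp_le _ _))
  rcases eq_or_lt_of_le (norm_nonneg (x - y)) with hr0 | hr0
  · -- x = y
    have hxy : x = y := by
      have := (norm_eq_zero.mp hr0.symm)
      exact sub_eq_zero.mp this
    subst hxy
    rw [sub_self, norm_zero, sub_self, norm_zero, Real.zero_rpow hm.ne', mul_zero]
  rcases le_or_gt ‖x - y‖ 1 with hr1 | hr1
  · -- small distance case
    have hpow : ∀ η : ℝ, 0 < η → m ≤ η →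
        ‖x' - y'‖ ^ η ≤ Real.exp (η * θ) * ‖x - y‖ ^ m := by
      intro η hη hmη
      calc ‖x' - y'‖ ^ η ≤ (Real.exp θ * ‖x - y‖) ^ η :=
            Real.rpow_le_rpow (norm_nonneg _) hE1 hη.le
        _ = Real.exp θ ^ η * ‖x - y‖ ^ η :=
            Real.mul_rpow (Real.exp_pos _).le (norm_nonneg _)
        _ = Real.exp (η * θ) * ‖x - y‖ ^ η := by rw [← Real.exp_mul, mul_comm θ η]
        _ ≤ Real.exp (η * θ) * ‖x - y‖ ^ m :=
            mul_le_mul_of_nonneg_left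
              (Real.rpow_le_rpow_of_exponent_ge hr0 hr1 hmη) (Real.exp_pos _).le
    have eA : Real.exp ((2 + η₂) * θ) * Real.exp (η₂ * θ) ≤ P := by
      rw [← Real.exp_add, hPdef]
      apply Real.exp_le_exp.2
      have h24 : (2 + 2 * η₂) * C₆ ≤ c := by rw [hcdef]; nlinarith
      have : (2 + η₂) * θ + η₂ * θ = ((2 + 2 * η₂) * C₆) * |t| := by rw [hθdef]; ring
      rw [this]
      exact mul_le_mul_of_nonneg_right h24 (abs_nonneg t)
    have eB : Real.exp θ * Real.exp (η₁ * θ) ≤ P := by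
      rw [← Real.exp_add, hPdef]
      apply Real.exp_le_exp.2
      have h11 : (1 + η₁) * C₆ ≤ c := by rw [hcdef]; nlinarith
      have : θ + η₁ * θ = ((1 + η₁) * C₆) * |t| := by rw [hθdef]; ring
      rw [this]
      exact mul_le_mul_of_nonneg_right h11 (abs_nonneg t)
    have hrm : (0:ℝ) ≤ ‖x - y‖ ^ m := by positivity
    calc ‖(Dκ t x').comp (A x') - (Dκ t y').comp (A y')‖
        ≤ ‖Dκ t x' - Dκ t y'‖ * ‖A x'‖ + ‖Dκ t y'‖ * ‖A x' - A y'‖ := hLHS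
      _ ≤ ((C₇ / C₆) * Real.exp ((2 + η₂) * θ) * ‖x' - y'‖ ^ η₂) * C₃
            + Real.exp θ * (C₅ * ‖x' - y'‖ ^ η₁) :=
          add_le_add
            (mul_le_mul hDH (hA x') (norm_nonneg _) (by positivity))
            (mul_le_mul (hDn y') (hAh x' y') (norm_nonneg _) (Real.exp_pos _).le)
      _ ≤ ((C₇ / C₆) * Real.exp ((2 + η₂) * θ) * (Real.exp (η₂ * θ) * ‖x - y‖ ^ m)) * C₃
            + Real.exp θ * (C₅ * (Real.exp (η₁ * θ) * ‖x - y‖ ^ m)) :=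
          add_le_add
            (mul_le_mul_of_nonneg_right (mul_le_mul_of_nonneg_left
              (hpow η₂ hη₂ (min_le_right _ _)) (by positivity)) hC₃.le)
            (mul_le_mul_of_nonneg_left (mul_le_mul_of_nonneg_left
              (hpow η₁ hη₁ (min_le_left _ _)) hC₅.le) (Real.exp_pos _).le)
      _ = (C₃ * (C₇ / C₆)) * (Real.exp ((2 + η₂) * θ) * Real.exp (η₂ * θ)) * ‖x - y‖ ^ m
            + C₅ * (Real.exp θ * Real.exp (η₁ * θ)) * ‖x - y‖ ^ m := by ring
      _ ≤ (C₃ * (C₇ / C₆)) * P * ‖x - y‖ ^ m + C₅ * P * ‖x - y‖ ^ m :=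
          add_le_add
            (mul_le_mul_of_nonneg_right (mul_le_mul_of_nonneg_left eA (by positivity)) hrm)
            (mul_le_mul_of_nonneg_right (mul_le_mul_of_nonneg_left eB hC₅.le) hrm)
      _ = (C₃ * (C₇ / C₆) + C₅) * P * ‖x - y‖ ^ m := by ring
      _ ≤ c * P * ‖x - y‖ ^ m := by
          apply mul_le_mul_of_nonneg_right (mul_le_mul_of_nonneg_right _ hP.le) hrm
          rw [hcdef]
          have : C₃ * (C₇ / C₆) = C₃ * C₇ / C₆ := by ring
          rw [this]; linarith
  · -- large distance case
    have hrm : (1:ℝ) ≤ ‖x - y‖ ^ m := Real.one_le_rpow hr1.le hm.le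
    have hexpθ : Real.exp θ ≤ P := by
      rw [hPdef]
      apply Real.exp_le_exp.2
      rw [hθdef]
      apply mul_le_mul_of_nonneg_right _ (abs_nonneg t)
      rw [hcdef]; linarith
    calc ‖(Dκ t x').comp (A x') - (Dκ t y').comp (A y')‖
        ≤ ‖(Dκ t x').comp (A x')‖ + ‖(Dκ t y').comp (A y')‖ := norm_sub_le _ _
      _ ≤ Real.exp θ * C₃ + Real.exp θ * C₃ :=
          add_le_add
            ((ContinuousLinearMap.opNorm_comp_le _ _).trans
              (mul_le_mul (hDn x') (hA x') (norm_nonneg _) (Real.exp_pos _).le))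
            ((ContinuousLinearMap.opNorm_comp_le _ _).trans
              (mul_le_mul (hDn y') (hA y') (norm_nonneg _) (Real.exp_pos _).le))
      _ = 2 * C₃ * Real.exp θ := by ring
      _ ≤ c * P := by
          have h2c : 2 * C₃ ≤ c := by rw [hcdef]; linarith
          exact mul_le_mul h2c hexpθ (Real.exp_pos _).le hc.le
      _ ≤ c * P * ‖x - y‖ ^ m := le_mul_of_one_le_right (by positivity) hrm
end

section
/- If in addition the drift is bounded, |b(x)| ≤ C₈ for all x ∈ ℝ^d with C₈ > 0, then there exists a constant C₉ > 0, depending only on d, η₁, η₂, C₃, C₅, C₆, C₇, C₈, such that ‖A_t(x) − A_s(x)‖ ≤ C₉ e^{C₉(|t| ∨ |s|)} |s − t|^{η₁ ∧ η₂} for all t, s ∈ ℝ and all x ∈ ℝ^d. -/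
/-!
Differentiating the variational equation `∂ₜ Dκₜ = -Db(κₜ) Dκₜ` and applying Grönwall's
inequality gives `‖Dκₜ‖ ≤ e^{C₆|t|}`, hence `κₜ` is `e^{C₆|t|}`-Lipschitz in space; applying
Grönwall once more to `Dκₜ(y) - Dκₜ(z)`, whose derivative picks up the `η₂`-Hölder defect of
`Db`, makes `Dκₜ` `η₂`-Hölder in space with constant `(C₇/C₆) e^{3C₆|t|}`. Since `b` is bounded,
`χₜ x` is `C₈`-Lipschitz in `t`, and `Dκₜ` is `C₆e^{C₆m}`-Lipschitz in `t` on `[-m, m]`,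
where `m = |t| ∨ |s|`. Splitting `Aₜ - Aₛ` into the variation of `A` and that of `Dκ` leaves powers `|s - t|^η` with
`min η₁ η₂ ≤ η ≤ 1`; as `|s - t| ≤ 2m`, each is at most `|s - t|^{min η₁ η₂} e^{2m}`.
-/

open Real Set

lemma norm_le_gronwallBound_abs {F : Type*} [NormedAddCommGroup F] [NormedSpace ℝ F]
    {f f' : ℝ → F} {K ε δ T : ℝ} (hf : ∀ t, HasDerivAt f (f' t) t)
    (hbound : ∀ t, |t| ≤ |T| → ‖f' t‖ ≤ K * ‖f t‖ + ε) (h0 : ‖f 0‖ ≤ δ) :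
    ‖f T‖ ≤ gronwallBound δ K ε |T| := by
  have forward : ∀ {g g' : ℝ → F}, (∀ t, HasDerivAt g (g' t) t) → ‖g 0‖ ≤ δ → ∀ S, 0 ≤ S →
      (∀ t ∈ Ico 0 S, ‖g' t‖ ≤ K * ‖g t‖ + ε) → ‖g S‖ ≤ gronwallBound δ K ε S :=
    fun hg hg0 S hS hgS => by
      simpa using norm_le_gronwallBound_of_norm_deriv_right_le
        (fun t _ => (hg t).continuousAt.continuousWithinAt) (fun t _ => (hg t).hasDerivWithinAt)
        hg0 hgS S ⟨hS, le_rfl⟩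
  rcases le_total 0 T with hT | hT
  · rw [abs_of_nonneg hT]
    refine forward hf h0 T hT fun t ht => hbound t ?_
    rw [abs_of_nonneg ht.1, abs_of_nonneg hT]
    exact ht.2.le
  · have hreflect : ∀ u, HasDerivAt (fun u => f (-u)) (-f' (-u)) u := fun u => by
      simpa [Function.comp_def] using (hf (-u)).scomp u (hasDerivAt_neg u)
    rw [abs_of_nonpos hT]
    simpa using forward hreflect (by simpa using h0) (-T) (neg_nonneg.2 hT) fun t ht => by
      rw [norm_neg]
      refine hbound (-t) ?_
      rw [abs_neg, abs_of_nonneg ht.1, abs_of_nonpos hT]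
      exact ht.2.le

lemma norm_comp_sub_comp_le {E F G : Type*} [SeminormedAddCommGroup E] [SeminormedAddCommGroup F]
    [SeminormedAddCommGroup G] [NormedSpace ℝ E] [NormedSpace ℝ F] [NormedSpace ℝ G]
    (f f' : F →L[ℝ] G) (g g' : E →L[ℝ] F) :
    ‖f.comp g - f'.comp g'‖ ≤ ‖f‖ * ‖g - g'‖ + ‖f - f'‖ * ‖g'‖ := by
  have hsplit : f.comp g - f'.comp g' = f.comp (g - g') + (f - f').comp g' := by
    rw [ContinuousLinearMap.comp_sub, ContinuousLinearMap.sub_comp]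
    abel
  rw [hsplit]
  exact (norm_add_le _ _).trans
    (add_le_add (ContinuousLinearMap.opNorm_comp_le _ _) (ContinuousLinearMap.opNorm_comp_le _ _))

lemma rpow_le_one_add {x η : ℝ} (hx : 0 ≤ x) (hη₀ : 0 ≤ η) (hη₁ : η ≤ 1) : x ^ η ≤ 1 + x := by
  have hbernoulli := rpow_one_add_le_one_add_mul_self (s := x - 1) (by linarith) hη₀ hη₁
  rw [add_sub_cancel] at hbernoulli
  nlinarith

lemma rpow_le_rpow_mul_one_add {h α η : ℝ} (hh : 0 ≤ h) (hα : 0 ≤ α) (hαη : α ≤ η)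
    (hη : η ≤ 1) : h ^ η ≤ h ^ α * (1 + h) := by
  rcases le_total h 1 with h1 | h1
  · calc h ^ η ≤ h ^ α := rpow_le_rpow_of_exponent_ge' hh h1 hα hαη
      _ ≤ h ^ α * (1 + h) := le_mul_of_one_le_right (rpow_nonneg hh _) (by linarith)
  · calc h ^ η ≤ h ^ (α + 1) := rpow_le_rpow_of_exponent_le h1 (by linarith)
      _ = h ^ α * h := by rw [rpow_add (by linarith), rpow_one]
      _ ≤ h ^ α * (1 + h) := by gcongr; linarith

def flowPushforward {E : Type*} [NormedAddCommGroup E] [NormedSpace ℝ E] (κ : ℝ → E → E)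
    (Dκ : ℝ → E → E →L[ℝ] E) (A : E → E →L[ℝ] E) (t : ℝ) (x : E) : E →L[ℝ] E :=
  (Dκ t (κ (-t) x)).comp (A (κ (-t) x))

section Flow

variable {E : Type*} [NormedAddCommGroup E] [NormedSpace ℝ E]
  {b : E → E} {κ : ℝ → E → E} {Dκ : ℝ → E → E →L[ℝ] E} {C : ℝ}

lemma norm_linearizedFlow_le (hDb : ∀ x, ‖fderiv ℝ b x‖ ≤ C)
    (hDκ₀ : ∀ x, Dκ 0 x = ContinuousLinearMap.id ℝ E)
    (hDκ : ∀ t x, HasDerivAt (fun s => Dκ s x) (-((fderiv ℝ b (κ t x)).comp (Dκ t x))) t)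
    (u : ℝ) (y : E) : ‖Dκ u y‖ ≤ exp (C * |u|) := by
  have hgronwall := norm_le_gronwallBound_abs (ε := 0) (δ := 1) (T := u) (hDκ · y)
    (fun v _ => by
      rw [norm_neg, add_zero]
      exact (ContinuousLinearMap.opNorm_comp_le _ _).trans (by gcongr; exact hDb _))
    (by rw [hDκ₀]; exact ContinuousLinearMap.norm_id_le)
  rwa [gronwallBound_ε0, one_mul] at hgronwall

lemma norm_flow_sub_le (hDb : ∀ x, ‖fderiv ℝ b x‖ ≤ C)
    (hDκ₀ : ∀ x, Dκ 0 x = ContinuousLinearMap.id ℝ E)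
    (hDκ : ∀ t x, HasDerivAt (fun s => Dκ s x) (-((fderiv ℝ b (κ t x)).comp (Dκ t x))) t)
    (hκF : ∀ t x, HasFDerivAt (κ t) (Dκ t x) x) (u : ℝ) (y z : E) :
    ‖κ u y - κ u z‖ ≤ exp (C * |u|) * ‖y - z‖ :=
  convex_univ.norm_image_sub_le_of_norm_hasFDerivWithin_le
    (fun w _ => (hκF u w).hasFDerivWithinAt)
    (fun w _ => norm_linearizedFlow_le hDb hDκ₀ hDκ u w) (mem_univ z) (mem_univ y)

lemma norm_flow_time_sub_le {B : ℝ} (hb : ∀ x, ‖b x‖ ≤ B)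
    (hκ : ∀ t x, HasDerivAt (fun s => κ s x) (-(b (κ t x))) t) (u v : ℝ) (y : E) :
    ‖κ u y - κ v y‖ ≤ B * |u - v| := by
  simpa [Real.norm_eq_abs] using convex_univ.norm_image_sub_le_of_norm_hasDerivWithin_le
    (fun w _ => (hκ w y).hasDerivWithinAt) (fun w _ => by rw [norm_neg]; exact hb _)
    (mem_univ v) (mem_univ u)

lemma norm_linearizedFlow_time_sub_le (hC : 0 ≤ C) (hDb : ∀ x, ‖fderiv ℝ b x‖ ≤ C)
    (hDκ₀ : ∀ x, Dκ 0 x = ContinuousLinearMap.id ℝ E)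
    (hDκ : ∀ t x, HasDerivAt (fun s => Dκ s x) (-((fderiv ℝ b (κ t x)).comp (Dκ t x))) t)
    {m u v : ℝ} (hu : |u| ≤ m) (hv : |v| ≤ m) (y : E) :
    ‖Dκ u y - Dκ v y‖ ≤ C * exp (C * m) * |u - v| := by
  simpa [Real.norm_eq_abs] using (convex_Icc (-m) m).norm_image_sub_le_of_norm_hasDerivWithin_le
    (fun w _ => (hDκ w y).hasDerivWithinAt)
    (fun w hw => by
      rw [norm_neg]
      refine (ContinuousLinearMap.opNorm_comp_le _ _).trans ?_
      gcongr
      · exact hDb _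
      · exact (norm_linearizedFlow_le hDb hDκ₀ hDκ w y).trans
          (exp_le_exp.2 (by gcongr; exact abs_le.2 hw)))
    (abs_le.1 hv) (abs_le.1 hu)

lemma norm_linearizedFlow_sub_le {L η : ℝ} (hC : 0 < C) (hL : 0 ≤ L) (hη₀ : 0 ≤ η)
    (hη₁ : η ≤ 1) (hDb : ∀ x, ‖fderiv ℝ b x‖ ≤ C)
    (hDbHol : ∀ x y, ‖fderiv ℝ b x - fderiv ℝ b y‖ ≤ L * ‖x - y‖ ^ η)
    (hDκ₀ : ∀ x, Dκ 0 x = ContinuousLinearMap.id ℝ E)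
    (hDκ : ∀ t x, HasDerivAt (fun s => Dκ s x) (-((fderiv ℝ b (κ t x)).comp (Dκ t x))) t)
    (hκF : ∀ t x, HasFDerivAt (κ t) (Dκ t x) x) (u : ℝ) (y z : E) :
    ‖Dκ u y - Dκ u z‖ ≤ L / C * exp (3 * C * |u|) * ‖y - z‖ ^ η := by
  set ε := L * exp (2 * C * |u|) * ‖y - z‖ ^ η with hε
  have hflow_holder : ∀ v, ‖κ v y - κ v z‖ ^ η ≤ exp (C * |v|) * ‖y - z‖ ^ η := fun v =>
    calc ‖κ v y - κ v z‖ ^ η ≤ (exp (C * |v|) * ‖y - z‖) ^ η := by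
          gcongr; exact norm_flow_sub_le hDb hDκ₀ hDκ hκF v y z
      _ = exp (η * (C * |v|)) * ‖y - z‖ ^ η := by
          rw [mul_rpow (exp_pos _).le (norm_nonneg _), ← exp_mul, mul_comm η]
      _ ≤ exp (C * |v|) * ‖y - z‖ ^ η := by
          gcongr ?_ * _
          exact exp_le_exp.2 (mul_le_of_le_one_left (by positivity) hη₁)
  have hgronwall := norm_le_gronwallBound_abs (f := fun v => Dκ v y - Dκ v z) (K := C)
    (ε := ε) (δ := 0) (T := u) (fun v => (hDκ v y).sub (hDκ v z))
    (fun v hv => by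
      rw [neg_sub_neg, norm_sub_rev]
      refine (norm_comp_sub_comp_le _ _ _ _).trans (add_le_add ?_ ?_)
      · gcongr; exact hDb _
      · calc ‖fderiv ℝ b (κ v y) - fderiv ℝ b (κ v z)‖ * ‖Dκ v z‖
            ≤ L * (exp (C * |v|) * ‖y - z‖ ^ η) * exp (C * |v|) := by
              gcongr
              · exact (hDbHol _ _).trans (by gcongr; exact hflow_holder v)
              · exact norm_linearizedFlow_le hDb hDκ₀ hDκ v z
          _ = L * exp (2 * C * |v|) * ‖y - z‖ ^ η := by
              rw [show 2 * C * |v| = C * |v| + C * |v| by ring, exp_add]; ring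
          _ ≤ ε := by rw [hε]; gcongr)
    (by simp [hDκ₀])
  calc ‖Dκ u y - Dκ u z‖ ≤ ε / C * (exp (C * |u|) - 1) := by
        simpa [gronwallBound_of_K_ne_0 hC.ne'] using hgronwall
    _ ≤ ε / C * exp (C * |u|) := by gcongr; linarith
    _ = L / C * exp (3 * C * |u|) * ‖y - z‖ ^ η := by
        rw [hε, show 3 * C * |u| = 2 * C * |u| + C * |u| by ring, exp_add]; ring

lemma norm_linearizedFlow_sub_linearizedFlow_le {L η : ℝ} (hC : 0 < C) (hL : 0 ≤ L)
    (hη₀ : 0 ≤ η) (hη₁ : η ≤ 1) (hDb : ∀ x, ‖fderiv ℝ b x‖ ≤ C)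
    (hDbHol : ∀ x y, ‖fderiv ℝ b x - fderiv ℝ b y‖ ≤ L * ‖x - y‖ ^ η)
    (hDκ₀ : ∀ x, Dκ 0 x = ContinuousLinearMap.id ℝ E)
    (hDκ : ∀ t x, HasDerivAt (fun s => Dκ s x) (-((fderiv ℝ b (κ t x)).comp (Dκ t x))) t)
    (hκF : ∀ t x, HasFDerivAt (κ t) (Dκ t x) x) {m t s : ℝ} (ht : |t| ≤ m) (hs : |s| ≤ m)
    (y z : E) :
    ‖Dκ t y - Dκ s z‖ ≤ exp (3 * C * m) * (C * |t - s| + L / C * ‖y - z‖ ^ η) := by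
  have hm : 0 ≤ m := (abs_nonneg t).trans ht
  calc ‖Dκ t y - Dκ s z‖ ≤ ‖Dκ t y - Dκ s y‖ + ‖Dκ s y - Dκ s z‖ :=
        norm_sub_le_norm_sub_add_norm_sub _ _ _
    _ ≤ C * exp (C * m) * |t - s| + L / C * exp (3 * C * |s|) * ‖y - z‖ ^ η :=
        add_le_add (norm_linearizedFlow_time_sub_le hC.le hDb hDκ₀ hDκ ht hs y)
          (norm_linearizedFlow_sub_le hC hL hη₀ hη₁ hDb hDbHol hDκ₀ hDκ hκF s y z)
    _ ≤ C * exp (3 * C * m) * |t - s| + L / C * exp (3 * C * m) * ‖y - z‖ ^ η := by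
        gcongr
        linarith
    _ = exp (3 * C * m) * (C * |t - s| + L / C * ‖y - z‖ ^ η) := by ring

lemma norm_flowPushforward_sub_le {A : E → E →L[ℝ] E} {C₃ C₅ C₆ C₇ C₈ η₁ η₂ : ℝ}
    (hC₅ : 0 ≤ C₅) (hC₆ : 0 < C₆) (hC₇ : 0 ≤ C₇) (hC₈ : 0 ≤ C₈)
    (hη₁ : 0 ≤ η₁) (hη₁' : η₁ ≤ 1) (hη₂ : 0 ≤ η₂) (hη₂' : η₂ ≤ 1)
    (hDb : ∀ x, ‖fderiv ℝ b x‖ ≤ C₆)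
    (hDbHol : ∀ x y, ‖fderiv ℝ b x - fderiv ℝ b y‖ ≤ C₇ * ‖x - y‖ ^ η₂)
    (hbB : ∀ x, ‖b x‖ ≤ C₈) (hA : ∀ x, ‖A x‖ ≤ C₃)
    (hAHol : ∀ x y, ‖A x - A y‖ ≤ C₅ * ‖x - y‖ ^ η₁)
    (hκ : ∀ t x, HasDerivAt (fun s => κ s x) (-(b (κ t x))) t)
    (hκF : ∀ t x, HasFDerivAt (κ t) (Dκ t x) x)
    (hDκ₀ : ∀ x, Dκ 0 x = ContinuousLinearMap.id ℝ E)
    (hDκ : ∀ t x, HasDerivAt (fun s => Dκ s x) (-((fderiv ℝ b (κ t x)).comp (Dκ t x))) t)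
    (t s : ℝ) (x : E) :
    ‖flowPushforward κ Dκ A t x - flowPushforward κ Dκ A s x‖ ≤
      (C₅ * (1 + C₈) + C₃ * C₆ + C₃ * (C₇ / C₆) * (1 + C₈)) *
        exp ((3 * C₆ + 2) * max |t| |s|) * |s - t| ^ min η₁ η₂ := by
  set m := max |t| |s|
  set α := min η₁ η₂
  set h := |s - t|
  set y := κ (-t) x
  set z := κ (-s) x
  set P := h ^ α * exp (2 * m)
  have hm : 0 ≤ m := (abs_nonneg t).trans (le_max_left _ _)
  have hα : 0 ≤ α := le_min hη₁ hη₂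
  have hh_le_P : ∀ η, α ≤ η → η ≤ 1 → h ^ η ≤ P := fun η hαη hη =>
    calc h ^ η ≤ h ^ α * (1 + h) := rpow_le_rpow_mul_one_add (abs_nonneg _) hα hαη hη
      _ ≤ h ^ α * exp (2 * m) := by
        gcongr
        calc 1 + h ≤ 1 + 2 * m := by
              have := abs_sub s t
              have := le_max_left |t| |s|
              have := le_max_right |t| |s|
              linarith
          _ ≤ exp (2 * m) := by linarith [add_one_le_exp (2 * m)]
  have hyz : ‖y - z‖ ≤ C₈ * h := by
    have := norm_flow_time_sub_le hbB hκ (-t) (-s) x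
    rwa [show -t - -s = s - t by ring] at this
  have hyz_pow : ∀ η, α ≤ η → η ≤ 1 → ‖y - z‖ ^ η ≤ (1 + C₈) * P := fun η hαη hη =>
    calc ‖y - z‖ ^ η ≤ (C₈ * h) ^ η := by gcongr; exact hα.trans hαη
      _ = C₈ ^ η * h ^ η := mul_rpow hC₈ (abs_nonneg _)
      _ ≤ (1 + C₈) * P := by
        gcongr
        · exact rpow_le_one_add hC₈ (hα.trans hαη) hη
        · exact hh_le_P η hαη hη
  have hDκt : ‖Dκ t y‖ ≤ exp (3 * C₆ * m) :=
    (norm_linearizedFlow_le hDb hDκ₀ hDκ t y).trans (exp_le_exp.2 (by nlinarith [le_max_left |t| |s|]))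
  have hAyz : ‖A y - A z‖ ≤ C₅ * ((1 + C₈) * P) :=
    (hAHol y z).trans (by gcongr; exact hyz_pow η₁ (min_le_left _ _) hη₁')
  have hDκyz : ‖Dκ t y - Dκ s z‖ ≤ exp (3 * C₆ * m) * (C₆ * P + C₇ / C₆ * ((1 + C₈) * P)) := by
    refine (norm_linearizedFlow_sub_linearizedFlow_le hC₆ hC₇ hη₂ hη₂' hDb hDbHol hDκ₀ hDκ hκF
      (le_max_left _ _) (le_max_right _ _) y z).trans ?_
    gcongr
    · rw [abs_sub_comm]
      simpa using hh_le_P 1 ((min_le_left _ _).trans hη₁') le_rfl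
    · exact hyz_pow η₂ (min_le_right _ _) hη₂'
  calc ‖flowPushforward κ Dκ A t x - flowPushforward κ Dκ A s x‖
      ≤ ‖Dκ t y‖ * ‖A y - A z‖ + ‖Dκ t y - Dκ s z‖ * ‖A z‖ := norm_comp_sub_comp_le _ _ _ _
    _ ≤ exp (3 * C₆ * m) * (C₅ * ((1 + C₈) * P)) +
        exp (3 * C₆ * m) * (C₆ * P + C₇ / C₆ * ((1 + C₈) * P)) * C₃ := by
        gcongr
        exact hA z
    _ = (C₅ * (1 + C₈) + C₃ * C₆ + C₃ * (C₇ / C₆) * (1 + C₈)) * exp ((3 * C₆ + 2) * m) *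
        h ^ α := by
        rw [show (3 * C₆ + 2) * m = 3 * C₆ * m + 2 * m by ring, exp_add]
        ring

end Flow

theorem stmt8_general (d : ℕ) (C₃ C₅ C₆ C₇ C₈ η₁ η₂ : ℝ)
    (hC₃ : 0 < C₃) (hC₅ : 0 < C₅) (hC₆ : 0 < C₆) (hC₇ : 0 < C₇) (hC₈ : 0 < C₈)
    (hη₁ : 0 < η₁) (hη₁' : η₁ ≤ 1) (hη₂ : 0 < η₂) (hη₂' : η₂ ≤ 1) :
    ∃ C₉ > 0,
      ∀ (b : EuclideanSpace ℝ (Fin d) → EuclideanSpace ℝ (Fin d)),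
        Differentiable ℝ b →
        (∀ x, ‖fderiv ℝ b x‖ ≤ C₆) →
        (∀ x y, ‖fderiv ℝ b x - fderiv ℝ b y‖ ≤ C₇ * ‖x - y‖ ^ η₂) →
        (∀ x, ‖b x‖ ≤ C₈) →
      ∀ (A : EuclideanSpace ℝ (Fin d) →
          (EuclideanSpace ℝ (Fin d) →L[ℝ] EuclideanSpace ℝ (Fin d))),
        (∀ x, ‖A x‖ ≤ C₃) →
        (∀ x y, ‖A x - A y‖ ≤ C₅ * ‖x - y‖ ^ η₁) →
      ∀ (κ : ℝ → EuclideanSpace ℝ (Fin d) → EuclideanSpace ℝ (Fin d))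
        (Dκ : ℝ → EuclideanSpace ℝ (Fin d) →
          (EuclideanSpace ℝ (Fin d) →L[ℝ] EuclideanSpace ℝ (Fin d))),
        (∀ x, κ 0 x = x) →
        (∀ (t : ℝ) (x : EuclideanSpace ℝ (Fin d)),
          HasDerivAt (fun s => κ s x) (-(b (κ t x))) t) →
        (∀ (t : ℝ) (x : EuclideanSpace ℝ (Fin d)), HasFDerivAt (κ t) (Dκ t x) x) →
        (∀ x, Dκ 0 x = ContinuousLinearMap.id ℝ (EuclideanSpace ℝ (Fin d))) →
        (∀ (t : ℝ) (x : EuclideanSpace ℝ (Fin d)),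
          HasDerivAt (fun s => Dκ s x) (-((fderiv ℝ b (κ t x)).comp (Dκ t x))) t) →
      ∀ (t s : ℝ) (x : EuclideanSpace ℝ (Fin d)),
        ‖(Dκ t (κ (-t) x)).comp (A (κ (-t) x)) - (Dκ s (κ (-s) x)).comp (A (κ (-s) x))‖
          ≤ C₉ * Real.exp (C₉ * max |t| |s|) * |s - t| ^ min η₁ η₂ := by
  set K := C₅ * (1 + C₈) + C₃ * C₆ + C₃ * (C₇ / C₆) * (1 + C₈)
  have hK : 0 < K := by positivity
  refine ⟨K + 3 * C₆ + 2, by positivity, ?_⟩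
  intro b _ hDb hDbHol hbB A hA hAHol κ Dκ _ hκ hκF hDκ₀ hDκ t s x
  have hm : 0 ≤ max |t| |s| := (abs_nonneg t).trans (le_max_left _ _)
  calc _ ≤ K * exp ((3 * C₆ + 2) * max |t| |s|) * |s - t| ^ min η₁ η₂ :=
        norm_flowPushforward_sub_le hC₅.le hC₆ hC₇.le hC₈.le hη₁.le hη₁' hη₂.le hη₂' hDb hDbHol
          hbB hA hAHol hκ hκF hDκ₀ hDκ t s x
    _ ≤ (K + 3 * C₆ + 2) * exp ((K + 3 * C₆ + 2) * max |t| |s|) * |s - t| ^ min η₁ η₂ := by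
        gcongr <;> linarith

/-- If in addition the drift is bounded (`|b(x)| ≤ C₈`), then there is
`C₉ > 0`, depending only on `d, η₁, η₂, C₃, C₅, C₆, C₇, C₈`, such that
`‖A_t(x) − A_s(x)‖ ≤ C₉ e^{C₉(|t| ∨ |s|)} |s − t|^{η₁ ∧ η₂}` for all `t, s ∈ ℝ`, `x ∈ ℝ^d`,
where `A_t(x) = Dκ_t(χ_t(x)) A(χ_t(x))` and `χ_t = κ_{−t}`. -/
theorem stmt8 (d : ℕ) (hd : 1 ≤ d) (C₃ C₅ C₆ C₇ C₈ η₁ η₂ : ℝ)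
    (hC₃ : 0 < C₃) (hC₅ : 0 < C₅) (hC₆ : 0 < C₆) (hC₇ : 0 < C₇) (hC₈ : 0 < C₈)
    (hη₁ : 0 < η₁) (hη₁' : η₁ ≤ 1) (hη₂ : 0 < η₂) (hη₂' : η₂ ≤ 1) :
    ∃ C₉ > 0,
      ∀ (b : EuclideanSpace ℝ (Fin d) → EuclideanSpace ℝ (Fin d)),
        Differentiable ℝ b →
        (∀ x, ‖fderiv ℝ b x‖ ≤ C₆) →
        (∀ x y, ‖fderiv ℝ b x - fderiv ℝ b y‖ ≤ C₇ * ‖x - y‖ ^ η₂) →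
        (∀ x, ‖b x‖ ≤ C₈) →
      ∀ (A : EuclideanSpace ℝ (Fin d) →
          (EuclideanSpace ℝ (Fin d) →L[ℝ] EuclideanSpace ℝ (Fin d))),
        (∀ x, ‖A x‖ ≤ C₃) →
        (∀ x y, ‖A x - A y‖ ≤ C₅ * ‖x - y‖ ^ η₁) →
      ∀ (κ : ℝ → EuclideanSpace ℝ (Fin d) → EuclideanSpace ℝ (Fin d))
        (Dκ : ℝ → EuclideanSpace ℝ (Fin d) →
          (EuclideanSpace ℝ (Fin d) →L[ℝ] EuclideanSpace ℝ (Fin d))),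
        (∀ x, κ 0 x = x) →
        (∀ (t : ℝ) (x : EuclideanSpace ℝ (Fin d)),
          HasDerivAt (fun s => κ s x) (-(b (κ t x))) t) →
        (∀ (t : ℝ) (x : EuclideanSpace ℝ (Fin d)), HasFDerivAt (κ t) (Dκ t x) x) →
        (∀ x, Dκ 0 x = ContinuousLinearMap.id ℝ (EuclideanSpace ℝ (Fin d))) →
        (∀ (t : ℝ) (x : EuclideanSpace ℝ (Fin d)),
          HasDerivAt (fun s => Dκ s x) (-((fderiv ℝ b (κ t x)).comp (Dκ t x))) t) →
      ∀ (t s : ℝ) (x : EuclideanSpace ℝ (Fin d)),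
        ‖(Dκ t (κ (-t) x)).comp (A (κ (-t) x)) - (Dκ s (κ (-s) x)).comp (A (κ (-s) x))‖
          ≤ C₉ * Real.exp (C₉ * max |t| |s|) * |s - t| ^ min η₁ η₂ :=
  stmt8_general d C₃ C₅ C₆ C₇ C₈ η₁ η₂ hC₃ hC₅ hC₆ hC₇ hC₈ hη₁ hη₁' hη₂ hη₂'
end

section
/- There exists a constant c > 0, depending only on C₃, C₆, C₇ and η₂, such that |V_t(x,z) − A_t(x) z| ≤ c e^{c|t|} |z|^{1+η₂} for all t ∈ ℝ and all x, z ∈ ℝ^d. -/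
/-!
Reversing time turns `κ` into the forward flow of `b`, so it suffices to treat `t ≥ 0` for the
flow `φ` of a vector field `v` whose derivative `Dv` is bounded by `K` and `η`-Hölder with
constant `C`. By Grönwall, `‖φ s (x + w) - φ s x‖ ≤ ‖w‖ e^{Ks}`. The linearization error
`ψ s = φ s (x + w) - φ s x - Dφ s x w` satisfies `ψ' = Dv (φ s x) ψ + R` where `R` is the
first-order Taylor remainder of `v`, so `‖R‖ ≤ C (‖w‖ e^{Ks})^{1+η}`; Grönwall again gives
`‖ψ t‖ ≤ (C / K) ‖w‖^{1+η} e^{(2+η)Kt}`. Finally `κ t ∘ κ (-t) = id` by uniqueness of solutions,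
and `w = A z` has `‖w‖ ≤ C₃ ‖z‖`.
-/

open Set Real NNReal

section VectorField

variable {E : Type*} [NormedAddCommGroup E] [NormedSpace ℝ E]
  {v : E → E} {Dv : E → E →L[ℝ] E}

theorem lipschitzWith_of_hasFDerivAt_of_norm_le {K : ℝ≥0}
    (hv : ∀ x, HasFDerivAt v (Dv x) x) (hDv : ∀ x, ‖Dv x‖ ≤ K) : LipschitzWith K v := by
  rw [← lipschitzOnWith_univ]
  exact convex_univ.lipschitzOnWith_of_nnnorm_hasFDerivWithin_le
    (fun x _ => (hv x).hasFDerivWithinAt) (fun x _ => hDv x)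

theorem norm_image_add_sub_sub_le_of_holder {C η : ℝ} (hC : 0 ≤ C) (hη : 0 ≤ η)
    (hv : ∀ x, HasFDerivAt v (Dv x) x) (hDv : ∀ x y, ‖Dv x - Dv y‖ ≤ C * ‖x - y‖ ^ η)
    (a h : E) : ‖v (a + h) - v a - Dv a h‖ ≤ C * ‖h‖ ^ (1 + η) := by
  have hball : ∀ x ∈ Metric.closedBall a ‖h‖, ‖Dv x - Dv a‖ ≤ C * ‖h‖ ^ η := fun x hx =>
    (hDv x a).trans (by gcongr; exact mem_closedBall_iff_norm.1 hx)
  have := (convex_closedBall a ‖h‖).norm_image_sub_le_of_norm_hasFDerivWithin_le'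
    (fun x _ => (hv x).hasFDerivWithinAt) hball (Metric.mem_closedBall_self (norm_nonneg h))
    (y := a + h) (by simp)
  rwa [add_sub_cancel_left, mul_assoc, ← rpow_add_one' (norm_nonneg h) (by positivity),
    add_comm η] at this

theorem norm_image_add_sub_sub_le {K C η : ℝ} (hC : 0 ≤ C) (hη : 0 ≤ η)
    (hv : ∀ x, HasFDerivAt v (Dv x) x) (hDv : ∀ x, ‖Dv x‖ ≤ K)
    (hDv' : ∀ x y, ‖Dv x - Dv y‖ ≤ C * ‖x - y‖ ^ η) (a h u : E) :
    ‖v (a + h) - v a - Dv a u‖ ≤ K * ‖h - u‖ + C * ‖h‖ ^ (1 + η) := by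
  have split : v (a + h) - v a - Dv a u = Dv a (h - u) + (v (a + h) - v a - Dv a h) := by
    rw [map_sub]; abel
  rw [split]
  exact (norm_add_le _ _).trans (add_le_add ((Dv a).le_of_opNorm_le (hDv a) _)
    (norm_image_add_sub_sub_le_of_holder hC hη hv hDv' a h))

end VectorField

section Flow

variable {E : Type*} [NormedAddCommGroup E] [NormedSpace ℝ E]
  {v : E → E} {Dv : E → E →L[ℝ] E}

structure IsVariationalFlow (v : E → E) (Dv : E → E →L[ℝ] E) (φ : ℝ → E → E)
    (Dφ : ℝ → E → E →L[ℝ] E) : Prop where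
  apply_zero : ∀ x, φ 0 x = x
  hasDerivAt : ∀ t x, HasDerivAt (φ · x) (v (φ t x)) t
  deriv_zero : ∀ x, Dφ 0 x = ContinuousLinearMap.id ℝ E
  hasDerivAt_deriv : ∀ t x, HasDerivAt (Dφ · x) ((Dv (φ t x)).comp (Dφ t x)) t

namespace IsVariationalFlow

variable {φ : ℝ → E → E} {Dφ : ℝ → E → E →L[ℝ] E} (hφ : IsVariationalFlow v Dv φ Dφ)
include hφ

theorem reverse : IsVariationalFlow (-v) (-Dv) (fun t => φ (-t)) (fun t => Dφ (-t)) where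
  apply_zero x := by simpa using hφ.apply_zero x
  hasDerivAt t x := by
    simpa [Function.comp_def] using (hφ.hasDerivAt (-t) x).scomp t (hasDerivAt_neg t)
  deriv_zero x := by simpa using hφ.deriv_zero x
  hasDerivAt_deriv t x := by
    simpa [Function.comp_def] using (hφ.hasDerivAt_deriv (-t) x).scomp t (hasDerivAt_neg t)

theorem hasDerivAt_linearizationError (x w : E) (t : ℝ) :
    HasDerivAt (fun s => φ s (x + w) - φ s x - Dφ s x w)
      (v (φ t (x + w)) - v (φ t x) - Dv (φ t x) (Dφ t x w)) t := by
  have h := ((hφ.hasDerivAt t (x + w)).sub (hφ.hasDerivAt t x)).sub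
    ((hφ.hasDerivAt_deriv t x).clm_apply (hasDerivAt_const t w))
  rwa [ContinuousLinearMap.comp_apply, map_zero, add_zero] at h

section Lipschitz

variable {K : ℝ≥0} (hv : LipschitzWith K v)
include hv

theorem apply_apply_neg (t : ℝ) (x : E) : φ t (φ (-t) x) = x := by
  have huniq := ODE_solution_unique_univ (v := fun _ => v) (s := fun _ => univ) (t₀ := 0)
    (fun _ => hv.lipschitzOnWith) (fun s => ⟨hφ.hasDerivAt s (φ (-t) x), trivial⟩)
    (fun s => ⟨(hφ.hasDerivAt (s - t) x).comp_sub_const s t, trivial⟩)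
    (by simp [hφ.apply_zero])
  simpa [hφ.apply_zero] using congrFun huniq t

theorem dist_le {t : ℝ} (ht : 0 ≤ t) (x y : E) :
    dist (φ t x) (φ t y) ≤ dist x y * exp (K * t) := by
  simpa [hφ.apply_zero] using dist_le_of_trajectories_ODE (v := fun _ => v) (a := 0) (b := t)
    (fun _ => hv) (fun s _ => (hφ.hasDerivAt s x).continuousAt.continuousWithinAt)
    (fun s _ => (hφ.hasDerivAt s x).hasDerivWithinAt)
    (fun s _ => (hφ.hasDerivAt s y).continuousAt.continuousWithinAt)
    (fun s _ => (hφ.hasDerivAt s y).hasDerivWithinAt) le_rfl t ⟨ht, le_rfl⟩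

end Lipschitz

variable {K : ℝ≥0} {C η : ℝ} (hv : ∀ x, HasFDerivAt v (Dv x) x) (hDv : ∀ x, ‖Dv x‖ ≤ K)
  (hDv' : ∀ x y, ‖Dv x - Dv y‖ ≤ C * ‖x - y‖ ^ η)
include hv hDv hDv'

theorem norm_linearizationError_le (hK : 0 < K) (hC : 0 ≤ C) (hη : 0 ≤ η) {t : ℝ} (ht : 0 ≤ t)
    (x w : E) :
    ‖φ t (x + w) - φ t x - Dφ t x w‖ ≤ C / K * ‖w‖ ^ (1 + η) * exp ((2 + η) * K * t) := by
  set M := ‖w‖ * exp (K * t) with hM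
  set ε := C * M ^ (1 + η) with hε
  have hdisp : ∀ s ∈ Icc 0 t, ‖φ s (x + w) - φ s x‖ ≤ M := fun s hs => by
    have := hφ.dist_le (lipschitzWith_of_hasFDerivAt_of_norm_le hv hDv) hs.1 (x + w) x
    rw [dist_eq_norm, dist_eq_norm, add_sub_cancel_left] at this
    exact this.trans (mul_le_mul_of_nonneg_left (exp_le_exp.2 (by gcongr; exact hs.2))
      (norm_nonneg w))
  have hderiv : ∀ s ∈ Ico 0 t,
      ‖v (φ s (x + w)) - v (φ s x) - Dv (φ s x) (Dφ s x w)‖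
        ≤ K * ‖φ s (x + w) - φ s x - Dφ s x w‖ + ε := fun s hs => by
    have := norm_image_add_sub_sub_le hC hη hv hDv hDv' (φ s x) (φ s (x + w) - φ s x)
      (Dφ s x w)
    rw [add_sub_cancel] at this
    exact this.trans (add_le_add le_rfl (mul_le_mul_of_nonneg_left
      (rpow_le_rpow (norm_nonneg _) (hdisp s (Ico_subset_Icc_self hs)) (by linarith)) hC))
  have hgron := norm_le_gronwallBound_of_norm_deriv_right_le (δ := 0)
    (fun s _ => (hφ.hasDerivAt_linearizationError x w s).continuousAt.continuousWithinAt)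
    (fun s _ => (hφ.hasDerivAt_linearizationError x w s).hasDerivWithinAt)
    (by simp [hφ.apply_zero, hφ.deriv_zero]) hderiv t ⟨ht, le_rfl⟩
  simp only [gronwallBound_of_K_ne_0 (NNReal.coe_ne_zero.2 hK.ne'), sub_zero,
    zero_mul, zero_add] at hgron
  calc _ ≤ _ := hgron
    _ ≤ ε / K * exp (K * t) := by gcongr; linarith
    _ = C / K * ‖w‖ ^ (1 + η) * exp ((2 + η) * K * t) := by
      rw [hε, hM, mul_rpow (norm_nonneg w) (exp_pos _).le, ← exp_mul, show (2 + η) * K * t =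
        K * t * (1 + η) + K * t by ring, exp_add]
      ring

theorem norm_linearizationError_le_abs (hK : 0 < K) (hC : 0 ≤ C) (hη : 0 ≤ η) (t : ℝ)
    (x w : E) :
    ‖φ t (x + w) - φ t x - Dφ t x w‖ ≤ C / K * ‖w‖ ^ (1 + η) * exp ((2 + η) * K * |t|) := by
  rcases le_total 0 t with ht | ht
  · rw [abs_of_nonneg ht]
    exact hφ.norm_linearizationError_le hv hDv hDv' hK hC hη ht x w
  · have hDv_neg : ∀ x y, ‖(-Dv) x - (-Dv) y‖ ≤ C * ‖x - y‖ ^ η := fun x y => by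
      rw [Pi.neg_apply, Pi.neg_apply, neg_sub_neg, norm_sub_rev]
      exact hDv' x y
    simpa [abs_of_nonpos ht] using hφ.reverse.norm_linearizationError_le (fun x => (hv x).neg)
      (fun x => (norm_neg (Dv x)).trans_le (hDv x)) hDv_neg hK hC hη (neg_nonneg.2 ht) x w

end IsVariationalFlow

end Flow

theorem stmt11_general (C₃ C₆ C₇ η₂ : ℝ) (hC₃ : 0 < C₃) (hC₆ : 0 < C₆) (hC₇ : 0 < C₇)
    (hη₂ : 0 < η₂) :
    ∃ c > 0, ∀ (d : ℕ), 1 ≤ d →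
      ∀ (b : EuclideanSpace ℝ (Fin d) → EuclideanSpace ℝ (Fin d)),
        Differentiable ℝ b →
        (∀ x, ‖fderiv ℝ b x‖ ≤ C₆) →
        (∀ x y, ‖fderiv ℝ b x - fderiv ℝ b y‖ ≤ C₇ * ‖x - y‖ ^ η₂) →
      ∀ (A : EuclideanSpace ℝ (Fin d) →
          (EuclideanSpace ℝ (Fin d) →L[ℝ] EuclideanSpace ℝ (Fin d))),
        (∀ x, ‖A x‖ ≤ C₃) →
      ∀ (κ : ℝ → EuclideanSpace ℝ (Fin d) → EuclideanSpace ℝ (Fin d))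
        (Dκ : ℝ → EuclideanSpace ℝ (Fin d) →
          (EuclideanSpace ℝ (Fin d) →L[ℝ] EuclideanSpace ℝ (Fin d))),
        (∀ x, κ 0 x = x) →
        (∀ (t : ℝ) (x : EuclideanSpace ℝ (Fin d)),
          HasDerivAt (fun s => κ s x) (-(b (κ t x))) t) →
        (∀ (t : ℝ) (x : EuclideanSpace ℝ (Fin d)), HasFDerivAt (κ t) (Dκ t x) x) →
        (∀ x, Dκ 0 x = ContinuousLinearMap.id ℝ (EuclideanSpace ℝ (Fin d))) →
        (∀ (t : ℝ) (x : EuclideanSpace ℝ (Fin d)),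
          HasDerivAt (fun s => Dκ s x) (-((fderiv ℝ b (κ t x)).comp (Dκ t x))) t) →
      ∀ (t : ℝ) (x z : EuclideanSpace ℝ (Fin d)),
        ‖(κ t (κ (-t) x + A (κ (-t) x) z) - x) - (Dκ t (κ (-t) x)) (A (κ (-t) x) z)‖
          ≤ c * Real.exp (c * |t|) * ‖z‖ ^ (1 + η₂) := by
  refine ⟨C₇ / C₆ * C₃ ^ (1 + η₂) + (2 + η₂) * C₆, by positivity, ?_⟩
  intro d _ b hb hb1 hb2 A hA κ Dκ hκ0 hκ' _ hDκ0 hDκ' t x z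
  have hbackward : IsVariationalFlow (-b) (-fderiv ℝ b) κ Dκ :=
    ⟨hκ0, hκ', hDκ0, fun t x => by simpa using hDκ' t x⟩
  have hforward := hbackward.reverse
  rw [neg_neg, neg_neg] at hforward
  have hb' : ∀ x, HasFDerivAt b (fderiv ℝ b x) x := fun x => (hb x).hasFDerivAt
  set K : ℝ≥0 := ⟨C₆, hC₆.le⟩
  have hK : 0 < K := hC₆
  have hx : κ t (κ (-t) x) = x := by
    simpa using hforward.apply_apply_neg
      (lipschitzWith_of_hasFDerivAt_of_norm_le (K := K) hb' hb1) (-t) x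
  have hlin := hforward.norm_linearizationError_le_abs (K := K) hb' hb1 hb2 hK hC₇.le hη₂.le
    (-t) (κ (-t) x) (A (κ (-t) x) z)
  simp only [neg_neg, abs_neg, hx] at hlin
  have hAz : ‖A (κ (-t) x) z‖ ^ (1 + η₂) ≤ C₃ ^ (1 + η₂) * ‖z‖ ^ (1 + η₂) := by
    rw [← mul_rpow hC₃.le (norm_nonneg z)]
    exact rpow_le_rpow (norm_nonneg _) ((A _).le_of_opNorm_le (hA _) z) (by positivity)
  calc _ ≤ C₇ / C₆ * (C₃ ^ (1 + η₂) * ‖z‖ ^ (1 + η₂)) * exp ((2 + η₂) * C₆ * |t|) := by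
        refine hlin.trans ?_
        change _ ≤ C₇ / K * _ * exp ((2 + η₂) * K * |t|)
        gcongr
    _ = C₇ / C₆ * C₃ ^ (1 + η₂) * exp ((2 + η₂) * C₆ * |t|) * ‖z‖ ^ (1 + η₂) := by ring
    _ ≤ _ := by
      gcongr
      · exact le_add_of_nonneg_right (by positivity)
      · exact le_add_of_nonneg_left (by positivity)

/-- The jump coefficient `V_t(x,z) = κ_t(χ_t(x) + A(χ_t(x))z) − x`
is well approximated by its linearization `A_t(x)z = Dκ_t(χ_t(x)) A(χ_t(x)) z`:
there is `c > 0`, depending only on `C₃, C₆, C₇, η₂`, such that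
`|V_t(x,z) − A_t(x)z| ≤ c e^{c|t|} |z|^{1+η₂}` for all `t ∈ ℝ`, `x, z ∈ ℝ^d`.
Here `χ_t = κ_{−t}` is the forward flow. -/
theorem stmt11 (C₃ C₆ C₇ η₂ : ℝ) (hC₃ : 0 < C₃) (hC₆ : 0 < C₆) (hC₇ : 0 < C₇)
    (hη₂ : 0 < η₂) (hη₂' : η₂ ≤ 1) :
    ∃ c > 0, ∀ (d : ℕ), 1 ≤ d →
      ∀ (b : EuclideanSpace ℝ (Fin d) → EuclideanSpace ℝ (Fin d)),
        Differentiable ℝ b →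
        (∀ x, ‖fderiv ℝ b x‖ ≤ C₆) →
        (∀ x y, ‖fderiv ℝ b x - fderiv ℝ b y‖ ≤ C₇ * ‖x - y‖ ^ η₂) →
      ∀ (A : EuclideanSpace ℝ (Fin d) →
          (EuclideanSpace ℝ (Fin d) →L[ℝ] EuclideanSpace ℝ (Fin d))),
        (∀ x, ‖A x‖ ≤ C₃) →
      ∀ (κ : ℝ → EuclideanSpace ℝ (Fin d) → EuclideanSpace ℝ (Fin d))
        (Dκ : ℝ → EuclideanSpace ℝ (Fin d) →
          (EuclideanSpace ℝ (Fin d) →L[ℝ] EuclideanSpace ℝ (Fin d))),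
        (∀ x, κ 0 x = x) →
        (∀ (t : ℝ) (x : EuclideanSpace ℝ (Fin d)),
          HasDerivAt (fun s => κ s x) (-(b (κ t x))) t) →
        (∀ (t : ℝ) (x : EuclideanSpace ℝ (Fin d)), HasFDerivAt (κ t) (Dκ t x) x) →
        (∀ x, Dκ 0 x = ContinuousLinearMap.id ℝ (EuclideanSpace ℝ (Fin d))) →
        (∀ (t : ℝ) (x : EuclideanSpace ℝ (Fin d)),
          HasDerivAt (fun s => Dκ s x) (-((fderiv ℝ b (κ t x)).comp (Dκ t x))) t) →
      ∀ (t : ℝ) (x z : EuclideanSpace ℝ (Fin d)),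
        ‖(κ t (κ (-t) x + A (κ (-t) x) z) - x) - (Dκ t (κ (-t) x)) (A (κ (-t) x) z)‖
          ≤ c * Real.exp (c * |t|) * ‖z‖ ^ (1 + η₂) :=
  stmt11_general C₃ C₆ C₇ η₂ hC₃ hC₆ hC₇ hη₂
end

section
/- Let B be a real d×d matrix and b(x) := Bx. Let A : ℝ^d → ℝ^{d×d} be bounded (‖A(x)‖ ≤ C₃) and Lipschitz (‖A(x) − A(y)‖ ≤ C₅|x − y|), and suppose there exist a matrix J and p₀ > 0 such that A(x) = J whenever |x| ≥ p₀. Define A_t(x) := e^{−tB} A(e^{tB} x). Then there exists C > 0 such that ‖A_t(x) − A_s(x)‖ ≤ C e^{C(|t| ∨ |s|)} |t − s| for all t, s ∈ ℝ and all x ∈ ℝ^d. -/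
/-!
Write `A_t x - A_s x = (e^{-tB} - e^{-sB}) A(e^{tB} x) + e^{-sB} (A(e^{tB} x) - A(e^{sB} x))`
and let `r = |t| ∨ |s|`. By the mean value inequality `‖e^{tB} - e^{sB}‖ ≤ ‖B‖ e^{‖B‖ r} |t - s|`,
so the first term is at most `C₃ ‖B‖ e^{‖B‖ r} |t - s|`. The second term vanishes when both
`e^{tB} x` and `e^{sB} x` lie outside the ball of radius `p₀`, where `A` is constant; otherwise
`‖x‖ ≤ e^{‖B‖ r} p₀`, and the Lipschitz bound gives `C₅ p₀ ‖B‖ e^{3 ‖B‖ r} |t - s|`.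
-/

open NormedSpace

section ExpBounds

variable {𝔸 : Type*} [NormedRing 𝔸] [NormedAlgebra ℝ 𝔸]

theorem exp_neg_mul_exp [CompleteSpace 𝔸] (a : 𝔸) : exp (-a) * exp a = 1 :=
  (invertibleExpOfMemBall (𝕂 := ℝ)
    ((expSeries_radius_eq_top ℝ 𝔸).symm ▸ edist_lt_top _ _)).invOf_mul_self

variable [NormOneClass 𝔸]

theorem norm_exp_le_exp_norm (a : 𝔸) : ‖exp a‖ ≤ Real.exp ‖a‖ := by
  have hterm (n : ℕ) : ‖(n.factorial⁻¹ : ℝ) • a ^ n‖ ≤ (n.factorial⁻¹ : ℝ) • ‖a‖ ^ n := by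
    rw [norm_smul, Real.norm_of_nonneg (by positivity), smul_eq_mul]
    gcongr
    exact norm_pow_le a n
  calc ‖exp a‖ ≤ ∑' n : ℕ, ‖(n.factorial⁻¹ : ℝ) • a ^ n‖ := by
        rw [exp_eq_tsum ℝ]
        exact norm_tsum_le_tsum_norm (norm_expSeries_summable' a)
    _ ≤ ∑' n : ℕ, (n.factorial⁻¹ : ℝ) • ‖a‖ ^ n :=
        (norm_expSeries_summable' a).tsum_le_tsum hterm (expSeries_summable' (𝕂 := ℝ) ‖a‖)
    _ = Real.exp ‖a‖ := by rw [Real.exp_eq_exp_ℝ, exp_eq_tsum ℝ]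

theorem norm_exp_smul_le (a : 𝔸) {u r : ℝ} (hu : |u| ≤ r) :
    ‖exp (u • a)‖ ≤ Real.exp (‖a‖ * r) := by
  refine (norm_exp_le_exp_norm _).trans (Real.exp_le_exp.mpr ?_)
  rw [norm_smul, Real.norm_eq_abs, mul_comm]
  gcongr

variable [CompleteSpace 𝔸]

theorem norm_exp_smul_sub_exp_smul_le (a : 𝔸) (t s : ℝ) :
    ‖exp (t • a) - exp (s • a)‖ ≤ ‖a‖ * Real.exp (‖a‖ * max |t| |s|) * |t - s| := by
  set r := max |t| |s|
  have hderiv_le (u : ℝ) (hu : u ∈ Set.Icc (-r) r) :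
      ‖exp (u • a) * a‖ ≤ Real.exp (‖a‖ * r) * ‖a‖ :=
    (norm_mul_le _ _).trans <| by gcongr; exact norm_exp_smul_le a (abs_le.mpr hu)
  have hmem (u : ℝ) (hu : |u| ≤ r) : u ∈ Set.Icc (-r) r := abs_le.mp hu
  have hmvt := (convex_Icc (-r) r).norm_image_sub_le_of_norm_hasDerivWithin_le
    (fun u _ => (hasDerivAt_exp_smul_const a u).hasDerivWithinAt) hderiv_le
    (hmem s (le_max_right _ _)) (hmem t (le_max_left _ _))
  rw [Real.norm_eq_abs] at hmvt
  linarith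

end ExpBounds

theorem norm_sub_le_mul_radius_of_const_outside_ball {E F : Type*} [SeminormedAddCommGroup E]
    [SeminormedAddCommGroup F] {A : E → F} {J : F} {K R δ : ℝ} (hK : 0 ≤ K) (hR : 0 ≤ R)
    (hδ : 0 ≤ δ) (hlip : ∀ x y, ‖A x - A y‖ ≤ K * ‖x - y‖)
    (hconst : ∀ x, R ≤ ‖x‖ → A x = J) {y z : E} (hyz : ‖y - z‖ ≤ δ * min ‖y‖ ‖z‖) :
    ‖A y - A z‖ ≤ K * δ * R := by
  by_cases hfar : R ≤ min ‖y‖ ‖z‖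
  · rw [hconst y (hfar.trans (min_le_left _ _)), hconst z (hfar.trans (min_le_right _ _)),
      sub_self, norm_zero]
    positivity
  · calc ‖A y - A z‖ ≤ K * (δ * min ‖y‖ ‖z‖) := (hlip y z).trans (by gcongr)
      _ ≤ K * δ * R := by rw [← mul_assoc]; gcongr; exact (not_le.mp hfar).le

section Conjugation

variable {E : Type*} [NormedAddCommGroup E] [NormedSpace ℝ E] [CompleteSpace E] [Nontrivial E]

theorem norm_le_exp_mul_norm_exp_smul_apply (B : E →L[ℝ] E) {u r : ℝ} (hu : |u| ≤ r) (x : E) :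
    ‖x‖ ≤ Real.exp (‖B‖ * r) * ‖exp (u • B) x‖ := by
  have hx : exp ((-u) • B) (exp (u • B) x) = x := by
    rw [neg_smul]
    change (exp (-(u • B)) * exp (u • B)) x = x
    rw [exp_neg_mul_exp]
    rfl
  calc ‖x‖ = ‖exp ((-u) • B) (exp (u • B) x)‖ := by rw [hx]
    _ ≤ ‖exp ((-u) • B)‖ * ‖exp (u • B) x‖ := ContinuousLinearMap.le_opNorm _ _
    _ ≤ Real.exp (‖B‖ * r) * ‖exp (u • B) x‖ := by
        gcongr; exact norm_exp_smul_le B (by rwa [abs_neg])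

theorem norm_exp_conj_sub_exp_conj_le (B : E →L[ℝ] E) (A : E → E →L[ℝ] E)
    {C₃ C₅ p₀ : ℝ} {J : E →L[ℝ] E} (hC₅ : 0 ≤ C₅) (hp₀ : 0 ≤ p₀) (hA : ∀ x, ‖A x‖ ≤ C₃)
    (hALip : ∀ x y, ‖A x - A y‖ ≤ C₅ * ‖x - y‖) (hAconst : ∀ x, p₀ ≤ ‖x‖ → A x = J)
    (t s : ℝ) (x : E) :
    ‖(exp ((-t) • B)).comp (A (exp (t • B) x)) - (exp ((-s) • B)).comp (A (exp (s • B) x))‖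
      ≤ (C₃ + C₅ * p₀) * ‖B‖ * Real.exp (3 * ‖B‖ * max |t| |s|) * |t - s| := by
  set r := max |t| |s|
  set e := Real.exp (‖B‖ * r)
  set D := ‖B‖ * e * |t - s|
  have hC₃ : 0 ≤ C₃ := (norm_nonneg _).trans (hA x)
  have he : 1 ≤ e := Real.one_le_exp (by positivity)
  have hdiff : ‖exp (t • B) - exp (s • B)‖ ≤ D := norm_exp_smul_sub_exp_smul_le B t s
  have hdiff_neg : ‖exp ((-t) • B) - exp ((-s) • B)‖ ≤ D := by
    simpa only [abs_neg, neg_sub_neg, abs_sub_comm s t] using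
      norm_exp_smul_sub_exp_smul_le B (-t) (-s)
  have hx : ‖x‖ ≤ e * min ‖exp (t • B) x‖ ‖exp (s • B) x‖ := by
    rw [mul_min_of_nonneg _ _ (Real.exp_nonneg _)]
    exact le_min (norm_le_exp_mul_norm_exp_smul_apply B (le_max_left _ _) x)
      (norm_le_exp_mul_norm_exp_smul_apply B (le_max_right _ _) x)
  have hA_diff : ‖A (exp (t • B) x) - A (exp (s • B) x)‖ ≤ C₅ * (D * e) * p₀ := by
    refine norm_sub_le_mul_radius_of_const_outside_ball hC₅ hp₀ (by positivity) hALip hAconst ?_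
    calc ‖exp (t • B) x - exp (s • B) x‖ = ‖(exp (t • B) - exp (s • B)) x‖ := rfl
      _ ≤ ‖exp (t • B) - exp (s • B)‖ * ‖x‖ := ContinuousLinearMap.le_opNorm _ _
      _ ≤ D * (e * min ‖exp (t • B) x‖ ‖exp (s • B) x‖) := by gcongr
      _ = _ := by ring
  have he3 : Real.exp (3 * ‖B‖ * r) = e ^ 3 := by rw [← Real.exp_nat_mul]; ring_nf
  calc _ = ‖(exp ((-t) • B) - exp ((-s) • B)).comp (A (exp (t • B) x))
          + (exp ((-s) • B)).comp (A (exp (t • B) x) - A (exp (s • B) x))‖ := by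
        rw [ContinuousLinearMap.sub_comp, ContinuousLinearMap.comp_sub, sub_add_sub_cancel]
    _ ≤ D * C₃ + e * (C₅ * (D * e) * p₀) := by
        refine (norm_add_le _ _).trans (add_le_add ?_ ?_) <;>
          refine (ContinuousLinearMap.opNorm_comp_le _ _).trans ?_
        · gcongr; exact hA _
        · gcongr; exact norm_exp_smul_le B (by rw [abs_neg]; exact le_max_right _ _)
    _ ≤ D * (C₃ * (e * e)) + e * (C₅ * (D * e) * p₀) := by
        gcongr; exact le_mul_of_one_le_right hC₃ (one_le_mul_of_one_le_of_one_le he he)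
    _ = (C₃ + C₅ * p₀) * ‖B‖ * Real.exp (3 * ‖B‖ * r) * |t - s| := by rw [he3]; ring

end Conjugation

/-- For a linear drift `b(x) = Bx` and a bounded Lipschitz matrix field
`A` that is constant outside a ball, the family `A_t(x) = e^{−tB} A(e^{tB} x)` is Lipschitz
in time: there is `C > 0` with `‖A_t(x) − A_s(x)‖ ≤ C e^{C(|t| ∨ |s|)} |t − s|`
for all `t, s ∈ ℝ` and `x ∈ ℝ^d`. -/
theorem stmt13 {d : ℕ} (hd : 1 ≤ d) (C₃ C₅ : ℝ) (hC₃ : 0 < C₃) (hC₅ : 0 < C₅)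
    (B : EuclideanSpace ℝ (Fin d) →L[ℝ] EuclideanSpace ℝ (Fin d))
    (A : EuclideanSpace ℝ (Fin d) →
      (EuclideanSpace ℝ (Fin d) →L[ℝ] EuclideanSpace ℝ (Fin d)))
    (hA : ∀ x, ‖A x‖ ≤ C₃)
    (hALip : ∀ x y, ‖A x - A y‖ ≤ C₅ * ‖x - y‖)
    (J : EuclideanSpace ℝ (Fin d) →L[ℝ] EuclideanSpace ℝ (Fin d))
    (p₀ : ℝ) (hp₀ : 0 < p₀)
    (hAconst : ∀ x : EuclideanSpace ℝ (Fin d), p₀ ≤ ‖x‖ → A x = J) :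
    ∃ C > 0, ∀ (t s : ℝ) (x : EuclideanSpace ℝ (Fin d)),
      ‖(NormedSpace.exp ((-t) • B)).comp (A (NormedSpace.exp (t • B) x))
        - (NormedSpace.exp ((-s) • B)).comp (A (NormedSpace.exp (s • B) x))‖
        ≤ C * Real.exp (C * max |t| |s|) * |t - s| := by
  have : Nonempty (Fin d) := ⟨⟨0, hd⟩⟩
  refine ⟨(C₃ + C₅ * p₀) * ‖B‖ + 3 * ‖B‖ + 1, by positivity, fun t s x => ?_⟩
  refine (norm_exp_conj_sub_exp_conj_le B A hC₅.le hp₀.le hA hALip hAconst t s x).trans ?_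
  have hB : 0 ≤ (C₃ + C₅ * p₀) * ‖B‖ := by positivity
  gcongr <;> linarith [norm_nonneg B]
end

section
/- For every α ∈ (0,2] there exists c > 0 (one may take c = 8^{−1}·4^{−α}) such that for all t ∈ (0, π/6] and all z = (z₁,z₂) ∈ ℝ² with |z₂| > (t/2)|z₁|, one has ∫_{−t}^{0} |z₁ sin r + z₂ cos r|^{α} dr ≥ c t |z₂|^{α}. -/
open Real

/-- For `α ∈ (0,2]` there is `c > 0` such that for all `t ∈ (0, π/6]`
and all `(z₁,z₂) ∈ ℝ²` with `|z₂| > (t/2)|z₁|`,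
`∫_{−t}^{0} |z₁ sin r + z₂ cos r|^α dr ≥ c t |z₂|^α`. -/
theorem stmt15 (α : ℝ) (hα : 0 < α) (hα' : α ≤ 2) :
    ∃ c > 0, ∀ t : ℝ, 0 < t → t ≤ π / 6 → ∀ z₁ z₂ : ℝ, t / 2 * |z₁| < |z₂| →
      c * t * |z₂| ^ α ≤ ∫ r in (-t)..(0:ℝ), |z₁ * Real.sin r + z₂ * Real.cos r| ^ α := by
  refine ⟨4 ^ (-α) / 8, by positivity, fun t ht ht' z₁ z₂ hz => ?_⟩
  have hz₂ : 0 < |z₂| := lt_of_le_of_lt (by positivity) hz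
  set f : ℝ → ℝ := fun r => |z₁ * Real.sin r + z₂ * Real.cos r| ^ α with hf
  have hcont : Continuous f := by
    apply Continuous.rpow_const (by continuity) (fun x => Or.inr hα.le)
  have hnn : ∀ r, 0 ≤ f r := fun r => Real.rpow_nonneg (abs_nonneg _) _
  -- pointwise bound on [-(t/4), 0]
  have key : ∀ r ∈ Set.Icc (-(t/4)) (0:ℝ), (|z₂|/4) ^ α ≤ f r := by
    intro r hr
    apply Real.rpow_le_rpow (by positivity) _ hα.le
    have hr1 : |r| ≤ t / 4 := by
      rw [abs_le]; exact ⟨hr.1, le_trans hr.2 (by linarith)⟩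
    have hsin : |Real.sin r| ≤ t / 4 := le_trans (Real.abs_sin_le_abs) hr1
    have hz₁ : t / 4 * |z₁| ≤ |z₂| / 2 := by linarith
    have hcos : (3:ℝ)/4 ≤ Real.cos r := by
      have h1 : 1 - r ^ 2 / 2 ≤ Real.cos r := Real.one_sub_sq_div_two_le_cos
      have h2 : r ^ 2 ≤ (t/4) ^ 2 := by
        rw [← sq_abs r]; exact pow_le_pow_left₀ (abs_nonneg r) hr1 2
      have hpi : π ≤ 4 := Real.pi_le_four
      nlinarith
    have habs : |z₂| * Real.cos r - |z₁| * |Real.sin r| ≤ |z₁ * Real.sin r + z₂ * Real.cos r| := by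
      have : |z₂ * Real.cos r| - |(-(z₁ * Real.sin r))| ≤ |z₂ * Real.cos r - (-(z₁ * Real.sin r))| :=
        abs_sub_abs_le_abs_sub _ _
      rw [abs_neg, abs_mul, abs_mul, sub_neg_eq_add] at this
      rw [abs_of_nonneg (by positivity : (0:ℝ) ≤ Real.cos r)] at this
      calc |z₂| * Real.cos r - |z₁| * |Real.sin r| ≤ |z₂ * Real.cos r + z₁ * Real.sin r| := this
        _ = |z₁ * Real.sin r + z₂ * Real.cos r| := by ring_nf
    have hprod : |z₁| * |Real.sin r| ≤ |z₂| / 2 := by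
      calc |z₁| * |Real.sin r| ≤ |z₁| * (t/4) := by
            exact mul_le_mul_of_nonneg_left hsin (abs_nonneg _)
        _ = t / 4 * |z₁| := by ring
        _ ≤ |z₂| / 2 := hz₁
    nlinarith [mul_le_mul_of_nonneg_left hcos (le_of_lt hz₂)]
  have hint1 : IntervalIntegrable f MeasureTheory.volume (-t) (-(t/4)) :=
    hcont.intervalIntegrable _ _
  have hint2 : IntervalIntegrable f MeasureTheory.volume (-(t/4)) 0 :=
    hcont.intervalIntegrable _ _
  have hsplit : (∫ r in (-t)..(0:ℝ), f r)
      = (∫ r in (-t)..(-(t/4)), f r) + ∫ r in (-(t/4))..(0:ℝ), f r :=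
    (intervalIntegral.integral_add_adjacent_intervals hint1 hint2).symm
  have h1 : 0 ≤ ∫ r in (-t)..(-(t/4)), f r :=
    intervalIntegral.integral_nonneg (by linarith) (fun u _ => hnn u)
  have h2 : (t/4) * (|z₂|/4) ^ α ≤ ∫ r in (-(t/4))..(0:ℝ), f r := by
    have := intervalIntegral.integral_mono_on (by linarith : -(t/4) ≤ (0:ℝ))
      (intervalIntegrable_const) hint2 key
    rwa [intervalIntegral.integral_const, smul_eq_mul, sub_neg_eq_add, zero_add] at this
  have hpow : (|z₂|/4) ^ α = |z₂| ^ α * 4 ^ (-α) := by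
    rw [Real.div_rpow (abs_nonneg _) (by norm_num), Real.rpow_neg (by norm_num), div_eq_mul_inv]
  have hle : 4 ^ (-α) / 8 * t * |z₂| ^ α ≤ (t/4) * (|z₂|/4) ^ α := by
    rw [hpow]
    have h4 : (0:ℝ) < 4 ^ (-α) := Real.rpow_pos_of_pos (by norm_num) _
    have hzp : (0:ℝ) < |z₂| ^ α := Real.rpow_pos_of_pos hz₂ _
    nlinarith [mul_pos ht (mul_pos hzp h4)]
  linarith [hsplit ▸ (by linarith : (t/4) * (|z₂|/4) ^ α ≤ (∫ r in (-t)..(-(t/4)), f r) + ∫ r in (-(t/4))..(0:ℝ), f r)]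
end

section
/- For every α ∈ (0,2] there exists c > 0 such that for all t ∈ (0, π/6] and all z = (z₁,z₂) ∈ ℝ² with |z₂| ≤ (t/2)|z₁|, one has ∫_{−t}^{0} |z₁ sin r + z₂ cos r|^{α} dr ≥ c t^{1+α} |z₁|^{α}. -/
/-!
On the first quarter `[-t, -3t/4]` of the interval the term `z₁ sin r` dominates: there
`|sin r| ≥ 5t/8`, while `|z₂ cos r| ≤ t/2 · |z₁|`, so the integrand is at least `(t/8 · |z₁|)^α`
on a set of length `t/4`. The rest of the integral is nonnegative.
-/

open Real Set

theorem Real.five_eighths_mul_le_sin {t x : ℝ} (ht : t ≤ 1) (hx : x ∈ Icc (3 * t / 4) t) :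
    5 * t / 8 ≤ sin x := by
  obtain ⟨hx₁, hx₂⟩ := hx
  rcases (show 0 ≤ x by linarith).eq_or_lt with rfl | hx₀
  · simp only [sin_zero]; linarith
  -- `sin x > x - x³/6 ≥ 5x/6 ≥ 5t/8`, as `x ≤ 1`
  nlinarith [sin_gt_sub_cube hx₀, mul_pos hx₀ hx₀]

theorem le_abs_mul_sin_add_mul_cos {t r z₁ z₂ : ℝ} (ht : t ≤ 1) (hr : r ∈ Icc (-t) (-(3 * t / 4)))
    (hz : |z₂| ≤ t / 2 * |z₁|) : t / 8 * |z₁| ≤ |z₁ * sin r + z₂ * cos r| := by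
  have hsin : 5 * t / 8 ≤ |sin r| := by
    rw [← abs_neg, ← sin_neg]
    exact (Real.five_eighths_mul_le_sin ht ⟨by linarith [hr.2], by linarith [hr.1]⟩).trans
      (le_abs_self _)
  have hcos : |z₂ * cos r| ≤ t / 2 * |z₁| := by
    rw [abs_mul]
    exact (mul_le_of_le_one_right (abs_nonneg _) (abs_cos_le_one r)).trans hz
  calc t / 8 * |z₁| = |z₁| * (5 * t / 8) - t / 2 * |z₁| := by ring
    _ ≤ |z₁ * sin r| - |z₂ * cos r| := by
        rw [abs_mul]; gcongr
    _ ≤ |z₁ * sin r + z₂ * cos r| := abs_sub_abs_le_abs_add _ _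

theorem intervalIntegral.sub_mul_le_integral_of_le_on_Icc {f : ℝ → ℝ} {a b c m : ℝ}
    (hab : a ≤ b) (hbc : b ≤ c) (hf : IntervalIntegrable f MeasureTheory.volume a c)
    (hm : ∀ x ∈ Icc a b, m ≤ f x) (hf₀ : ∀ x ∈ Icc b c, 0 ≤ f x) :
    (b - a) * m ≤ ∫ x in a..c, f x := by
  have hb : b ∈ uIcc a c := mem_uIcc_of_le hab hbc
  have hf₁ := hf.mono_set (uIcc_subset_uIcc_left hb)
  have hf₂ := hf.mono_set (uIcc_subset_uIcc_right hb)
  rw [← integral_add_adjacent_intervals hf₁ hf₂]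
  have h₁ : (b - a) * m ≤ ∫ x in a..b, f x := by
    simpa [mul_comm] using integral_mono_on hab intervalIntegrable_const hf₁ hm
  linarith [integral_nonneg (μ := MeasureTheory.volume) hbc hf₀]

theorem stmt16_general (α : ℝ) (hα : 0 < α) :
    ∃ c > 0, ∀ t : ℝ, 0 < t → t ≤ π / 6 → ∀ z₁ z₂ : ℝ, |z₂| ≤ t / 2 * |z₁| →
      c * t ^ (1 + α) * |z₁| ^ α ≤
        ∫ r in (-t)..(0:ℝ), |z₁ * Real.sin r + z₂ * Real.cos r| ^ α := by
  refine ⟨(1 / 8 : ℝ) ^ α / 4, by positivity, fun t ht htπ z₁ z₂ hz => ?_⟩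
  have ht₁ : t ≤ 1 := by linarith [pi_lt_d2]
  have hcont : Continuous fun r => |z₁ * sin r + z₂ * cos r| ^ α :=
    (by fun_prop : Continuous fun r => |z₁ * sin r + z₂ * cos r|).rpow_const
      fun _ => Or.inr hα.le
  calc (1 / 8 : ℝ) ^ α / 4 * t ^ (1 + α) * |z₁| ^ α
      = (-(3 * t / 4) - -t) * (t / 8 * |z₁|) ^ α := by
        rw [rpow_add ht, rpow_one, mul_rpow (by positivity) (abs_nonneg _),
          show t / 8 = t * (1 / 8) by ring, mul_rpow ht.le (by norm_num)]
        ring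
    _ ≤ _ := intervalIntegral.sub_mul_le_integral_of_le_on_Icc (by linarith) (by linarith)
        (hcont.intervalIntegrable _ _)
        (fun r hr => rpow_le_rpow (by positivity) (le_abs_mul_sin_add_mul_cos ht₁ hr hz) hα.le)
        (fun _ _ => by positivity)

/-- For `α ∈ (0,2]` there is `c > 0` such that for all `t ∈ (0, π/6]`
and all `(z₁,z₂) ∈ ℝ²` with `|z₂| ≤ (t/2)|z₁|`,
`∫_{−t}^{0} |z₁ sin r + z₂ cos r|^α dr ≥ c t^{1+α} |z₁|^α`. -/
theorem stmt16 (α : ℝ) (hα : 0 < α) (hα' : α ≤ 2) :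
    ∃ c > 0, ∀ t : ℝ, 0 < t → t ≤ π / 6 → ∀ z₁ z₂ : ℝ, |z₂| ≤ t / 2 * |z₁| →
      c * t ^ (1 + α) * |z₁| ^ α ≤
        ∫ r in (-t)..(0:ℝ), |z₁ * Real.sin r + z₂ * Real.cos r| ^ α :=
  stmt16_general α hα
end

section
/- Let 0 < α₁ < α₂ ≤ 1. There exists c > 0, depending only on α₁ and α₂, such that for all t ∈ (0, π/6]: (1/(2π)²) ∫_{ℝ²} exp( − ∫_{−t}^{0} ( |z₁ cos r − z₂ sin r|^{α₁} + |z₁ sin r + z₂ cos r|^{α₂} ) dr ) dz₁ dz₂ ≤ c t^{−1 − 2/α₂}. In particular, this quantity divided by t^{−1/α₁ − 1/α₂} is bounded by c t^{1/α₁ − 1/α₂ − 1}, which tends to 0 as t → 0⁺ when 1/α₁ − 1/α₂ > 1. -/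
/-!
Discard the `α₁`-term. In polar coordinates `z = ρ (cos θ, sin θ)` the second coordinate of the
rotated vector is `ρ sin (r + θ)`, and on one end quarter of any window of length `t` it stays at
least `ρ t / 8`; if moreover `|z₂| ≥ 4 t |z₁|`, it stays at least `|z₂| / 4` on the whole window.
So the exponent dominates `(t^{1+α₂} |z₁|^{α₂} + t |z₂|^{α₂}) / 256`, and the integral is at most
a product of two integrals `∫ exp (-b |x|^{α₂}) dx = 2 b^{-1/α₂} Γ(1/α₂ + 1)`, i.e. a constant
times `t^{-(1+α₂)/α₂} t^{-1/α₂} = t^{-1-2/α₂}`.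
-/

open Real MeasureTheory Set

lemma half_le_sin_of_mem_Icc {s v : ℝ} (hs : 0 ≤ s) (hsv : s ≤ v) (hvs : v ≤ π - s) :
    s / 2 ≤ sin v := by
  have key : ∀ w, s ≤ w → w ≤ π / 2 → s / 2 ≤ sin w := fun w hsw hw => by
    have h := mul_le_sin (by linarith) hw
    have hs : s / 2 ≤ 2 / π * w := by
      rw [div_mul_eq_mul_div, le_div_iff₀ pi_pos]; nlinarith [pi_le_four]
    linarith
  rcases le_total v (π / 2) with hv | hv
  · exact key v hsv hv
  · simpa [sin_pi_sub] using key (π - v) (by linarith) (by linarith)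

lemma half_le_abs_sin_of_mem_Icc {s u : ℝ} (k : ℤ) (hs : 0 ≤ s) (hsu : s ≤ u - k * π)
    (hus : u - k * π ≤ π - s) : s / 2 ≤ |sin u| := by
  have h := half_le_sin_of_mem_Icc hs hsu hus
  rw [sin_sub_int_mul_pi] at h
  calc s / 2 ≤ |(-1) ^ k * sin u| := h.trans (le_abs_self _)
    _ = |sin u| := by rw [abs_mul, abs_neg_one_zpow, one_mul]

lemma rpow_div_le_div_rpow {α u c : ℝ} (hα₁ : α ≤ 1) (hu : 0 ≤ u) (hc : 1 ≤ c) :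
    u ^ α / c ≤ (u / c) ^ α := by
  have hcα : c ^ α ≤ c := by
    simpa using rpow_le_rpow_of_exponent_le hc hα₁
  rw [div_rpow hu (by linarith)]
  exact div_le_div_of_nonneg_left (by positivity) (by positivity) hcα

lemma mul_le_intervalIntegral_of_le_on_Icc {f : ℝ → ℝ} {a b c d m : ℝ} (hf : Continuous f)
    (hf₀ : ∀ x, 0 ≤ f x) (hca : c ≤ a) (hab : a ≤ b) (hbd : b ≤ d)
    (hm : ∀ x ∈ Icc a b, m ≤ f x) : (b - a) * m ≤ ∫ x in c..d, f x :=
  calc (b - a) * m = ∫ _ in a..b, m := by simp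
    _ ≤ ∫ x in a..b, f x :=
      intervalIntegral.integral_mono_on hab intervalIntegrable_const
        (hf.intervalIntegrable _ _) hm
    _ ≤ ∫ x in c..d, f x :=
      intervalIntegral.integral_mono_interval hca hab hbd (ae_of_all _ hf₀)
        (hf.intervalIntegrable _ _)

-- Take the end quarter of `[θ - t, θ]` on the far side of the multiple of `π` nearest its midpoint.
lemma exists_quarter_far_from_int_mul_pi {t : ℝ} (θ : ℝ) (ht : 0 ≤ t) (ht₂ : t ≤ 2) :
    ∃ a ∈ Icc (θ - t) (θ - t / 4), ∃ k : ℤ,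
      ∀ u ∈ Icc a (a + t / 4), t / 4 ≤ u - k * π ∧ u - k * π ≤ π - t / 4 := by
  set k := ⌊(θ - t / 2) / π⌋
  have hk₁ : k * π ≤ θ - t / 2 := by
    rw [← le_div_iff₀ pi_pos]; exact Int.floor_le _
  have hk₂ : θ - t / 2 < k * π + π := by
    have := Int.lt_floor_add_one ((θ - t / 2) / π)
    rw [div_lt_iff₀ pi_pos] at this; linarith
  have hπ := pi_gt_three
  rcases le_total (θ - t / 2 - k * π) (π / 2) with hv | hv
  · refine ⟨θ - t / 4, ⟨by linarith, le_rfl⟩, k, fun u hu => ?_⟩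
    constructor <;> linarith [hu.1, hu.2]
  · refine ⟨θ - t, ⟨le_rfl, by linarith⟩, k, fun u hu => ?_⟩
    constructor <;> linarith [hu.1, hu.2]

lemma integral_abs_sin_rpow_ge {α t : ℝ} (θ : ℝ) (hα : 0 ≤ α) (ht : 0 ≤ t) (ht₂ : t ≤ 2) :
    t / 4 * (t / 8) ^ α ≤ ∫ u in (θ - t)..θ, |sin u| ^ α := by
  obtain ⟨a, ⟨ha₁, ha₂⟩, k, hk⟩ := exists_quarter_far_from_int_mul_pi θ ht ht₂
  have h := mul_le_intervalIntegral_of_le_on_Icc (b := a + t / 4) (d := θ) (m := (t / 8) ^ α)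
    (continuous_sin.abs.rpow_const fun _ => Or.inr hα) (fun u => by positivity) ha₁
    (by linarith) (by linarith) fun u hu => by
      have hsin := half_le_abs_sin_of_mem_Icc k (by positivity) (hk u hu).1 (hk u hu).2
      exact rpow_le_rpow (by positivity) (by linarith) hα
  simpa using h

lemma le_integral_abs_mul_sin_add_mul_cos_rpow_of_le {α t x y : ℝ} (hα : 0 ≤ α) (hα₁ : α ≤ 1)
    (ht : 0 ≤ t) (ht₁ : t ≤ 1) (hxy : 4 * t * |x| ≤ |y|) :
    t * |y| ^ α / 4 ≤ ∫ r in (-t)..0, |x * sin r + y * cos r| ^ α := by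
  have hcont : Continuous fun r => |x * sin r + y * cos r| ^ α := by fun_prop (disch := simp [hα])
  have h := mul_le_intervalIntegral_of_le_on_Icc hcont (fun r => by positivity) le_rfl
    (neg_nonpos.2 ht) le_rfl (m := (|y| / 4) ^ α) fun r ⟨hr₁, hr₂⟩ => by
      have hsin : |sin r| ≤ t := abs_sin_le_abs.trans (abs_le.2 ⟨hr₁, by linarith⟩)
      have hcos : 1 / 2 ≤ cos r := by
        nlinarith [one_sub_sq_div_two_le_cos (x := r)]
      have hlow : |y| / 4 ≤ |x * sin r + y * cos r| := by
        calc |y| / 4 ≤ |y| * cos r - |x| * |sin r| := by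
              nlinarith [mul_le_mul_of_nonneg_left hsin (abs_nonneg x), abs_nonneg y]
          _ = |y * cos r| - |x * sin r| := by
              rw [abs_mul, abs_mul, abs_of_nonneg (by linarith : 0 ≤ cos r)]
          _ ≤ |x * sin r + y * cos r| := by
              have h := abs_sub_abs_le_abs_sub (y * cos r) (-(x * sin r))
              rwa [sub_neg_eq_add, add_comm, abs_neg] at h
      exact rpow_le_rpow (by positivity) hlow hα
  calc t * |y| ^ α / 4 ≤ t * (|y| / 4) ^ α := by
        rw [mul_div_assoc]
        exact mul_le_mul_of_nonneg_left (rpow_div_le_div_rpow hα₁ (by positivity) (by norm_num)) ht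
    _ ≤ _ := by simpa using h

lemma le_integral_abs_mul_sin_add_mul_cos_rpow_left {α t : ℝ} (x y : ℝ) (hα : 0 ≤ α) (hα₁ : α ≤ 1)
    (ht : 0 ≤ t) (ht₂ : t ≤ 2) :
    t * (t * |x|) ^ α / 32 ≤ ∫ r in (-t)..0, |x * sin r + y * cos r| ^ α := by
  set w : ℂ := ⟨x, y⟩
  have hpolar : ∀ r, x * sin r + y * cos r = ‖w‖ * sin (r + w.arg) := fun r => by
    rw [sin_add]
    linear_combination -sin r * Complex.norm_mul_cos_arg w - cos r * Complex.norm_mul_sin_arg w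
  have hshift : ∫ r in (-t)..0, |x * sin r + y * cos r| ^ α
      = ‖w‖ ^ α * ∫ u in (w.arg - t)..w.arg, |sin u| ^ α := by
    simp_rw [hpolar, abs_mul, abs_norm, mul_rpow (norm_nonneg w) (abs_nonneg _),
      intervalIntegral.integral_const_mul,
      intervalIntegral.integral_comp_add_right (fun u => |sin u| ^ α), neg_add_eq_sub, zero_add]
  have hx : |x| ≤ ‖w‖ := by simpa using Complex.abs_re_le_norm w
  rw [hshift, mul_rpow ht (abs_nonneg x)]
  calc t * (t ^ α * |x| ^ α) / 32 = |x| ^ α * (t / 4 * (t ^ α / 8)) := by ring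
    _ ≤ ‖w‖ ^ α * (t / 4 * (t / 8) ^ α) := by
      gcongr
      exact rpow_div_le_div_rpow hα₁ ht (by norm_num)
    _ ≤ _ := by gcongr; exact integral_abs_sin_rpow_ge w.arg hα ht ht₂

lemma le_integral_abs_mul_sin_add_mul_cos_rpow {α t : ℝ} (x y : ℝ) (hα : 0 ≤ α) (hα₁ : α ≤ 1)
    (ht : 0 ≤ t) (ht₁ : t ≤ 1) :
    (t * (t * |x|) ^ α + t * |y| ^ α) / 256 ≤
      ∫ r in (-t)..0, |x * sin r + y * cos r| ^ α := by
  rcases le_total (4 * t * |x|) |y| with hxy | hyx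
  · have hle : t * (t * |x|) ^ α ≤ t * |y| ^ α := by
      gcongr; nlinarith [abs_nonneg x]
    linarith [le_integral_abs_mul_sin_add_mul_cos_rpow_of_le hα hα₁ ht ht₁ hxy,
      mul_nonneg ht (rpow_nonneg (abs_nonneg y) α)]
  · have hle : |y| ^ α ≤ 4 * (t * |x|) ^ α := by
      have h := rpow_div_le_div_rpow hα₁ (by positivity : 0 ≤ 4 * (t * |x|))
        (by norm_num : (1 : ℝ) ≤ 4)
      rw [mul_div_cancel_left₀ _ four_ne_zero] at h
      calc |y| ^ α ≤ (4 * (t * |x|)) ^ α := by gcongr; linarith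
        _ ≤ _ := by linarith
    have hle' := mul_le_mul_of_nonneg_left hle ht
    linarith [le_integral_abs_mul_sin_add_mul_cos_rpow_left x y hα hα₁ ht (by linarith),
      mul_nonneg ht (rpow_nonneg (mul_nonneg ht (abs_nonneg x)) α)]

lemma integral_exp_neg_mul_abs_rpow {p b : ℝ} (hp : 0 < p) (hb : 0 < b) :
    ∫ x : ℝ, exp (-b * |x| ^ p) = 2 * (b ^ (-1 / p) * Gamma (1 / p + 1)) := by
  rw [integral_comp_abs (f := fun x => exp (-b * x ^ p)), integral_exp_neg_mul_rpow hp hb]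

lemma integrable_exp_neg_mul_abs_rpow {p b : ℝ} (hp : 0 < p) (hb : 0 < b) :
    Integrable fun x : ℝ => exp (-b * |x| ^ p) :=
  Integrable.of_integral_ne_zero <| by
    have := Gamma_pos_of_pos (by positivity : 0 < 1 / p + 1)
    rw [integral_exp_neg_mul_abs_rpow hp hb]
    positivity

lemma integrable_exp_neg_mul_abs_rpow_mul_exp_neg_mul_abs_rpow {p a b : ℝ} (hp : 0 < p)
    (ha : 0 < a) (hb : 0 < b) :
    Integrable fun z : ℝ × ℝ => exp (-a * |z.1| ^ p) * exp (-b * |z.2| ^ p) := by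
  rw [Measure.volume_eq_prod]
  exact (integrable_exp_neg_mul_abs_rpow hp ha).mul_prod (integrable_exp_neg_mul_abs_rpow hp hb)

lemma integral_exp_neg_mul_abs_rpow_mul_exp_neg_mul_abs_rpow {p a b : ℝ} (hp : 0 < p)
    (ha : 0 < a) (hb : 0 < b) :
    ∫ z : ℝ × ℝ, exp (-a * |z.1| ^ p) * exp (-b * |z.2| ^ p) =
      4 * (a * b) ^ (-1 / p) * Gamma (1 / p + 1) ^ 2 := by
  rw [Measure.volume_eq_prod, integral_prod_mul (fun x : ℝ => exp (-a * |x| ^ p))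
    (fun y : ℝ => exp (-b * |y| ^ p)), integral_exp_neg_mul_abs_rpow hp ha,
    integral_exp_neg_mul_abs_rpow hp hb, mul_rpow ha.le hb.le]
  ring

lemma integral_exp_neg_integral_rotation_rpow_le {α₁ α₂ t : ℝ} (hα₁ : 0 ≤ α₁) (hα₂ : 0 < α₂)
    (hα₂₁ : α₂ ≤ 1) (ht : 0 < t) (ht₁ : t ≤ 1) :
    ∫ z : ℝ × ℝ, exp (-(∫ r in (-t)..0,
        (|z.1 * cos r - z.2 * sin r| ^ α₁ + |z.1 * sin r + z.2 * cos r| ^ α₂)))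
      ≤ 4 * 256 ^ (2 / α₂) * Gamma (1 / α₂ + 1) ^ 2 * t ^ (-1 - 2 / α₂) := by
  set a := t ^ (1 + α₂) / 256
  set b := t / 256
  have ha : 0 < a := by positivity
  have hb : 0 < b := by positivity
  have hpt : ∀ z : ℝ × ℝ, exp (-(∫ r in (-t)..0,
      (|z.1 * cos r - z.2 * sin r| ^ α₁ + |z.1 * sin r + z.2 * cos r| ^ α₂)))
        ≤ exp (-a * |z.1| ^ α₂) * exp (-b * |z.2| ^ α₂) := fun z => by
    have hc₁ : Continuous fun r => |z.1 * cos r - z.2 * sin r| ^ α₁ := by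
      fun_prop (disch := simp [hα₁])
    have hc₂ : Continuous fun r => |z.1 * sin r + z.2 * cos r| ^ α₂ := by
      fun_prop (disch := simp [hα₂.le])
    have hmono : ∫ r in (-t)..0, |z.1 * sin r + z.2 * cos r| ^ α₂ ≤ ∫ r in (-t)..0,
        (|z.1 * cos r - z.2 * sin r| ^ α₁ + |z.1 * sin r + z.2 * cos r| ^ α₂) :=
      intervalIntegral.integral_mono_on (by linarith) (hc₂.intervalIntegrable _ _)
        ((hc₁.add hc₂).intervalIntegrable _ _) fun r _ => le_add_of_nonneg_left (by positivity)
    have hlow := le_integral_abs_mul_sin_add_mul_cos_rpow z.1 z.2 hα₂.le hα₂₁ ht.le ht₁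
    rw [mul_rpow ht.le (abs_nonneg _), ← mul_assoc, ← rpow_one_add' ht.le (by positivity)] at hlow
    have hab : a * |z.1| ^ α₂ + b * |z.2| ^ α₂ =
        (t ^ (1 + α₂) * |z.1| ^ α₂ + t * |z.2| ^ α₂) / 256 := by ring
    rw [← exp_add, exp_le_exp]
    linarith
  have hscale : (a * b) ^ (-1 / α₂) = 256 ^ (2 / α₂) * t ^ (-1 - 2 / α₂) := by
    rw [show a * b = (256 ^ 2)⁻¹ * t ^ (2 + α₂) by
      rw [show (2 : ℝ) + α₂ = (1 + α₂) + 1 by ring, rpow_add ht, rpow_one]; ring]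
    rw [mul_rpow (by positivity) (by positivity), inv_rpow (by positivity),
      ← rpow_neg (by positivity), ← rpow_natCast, ← rpow_mul (by positivity), ← rpow_mul ht.le]
    congr 2 <;> field_simp <;> ring
  calc _ ≤ ∫ z : ℝ × ℝ, exp (-a * |z.1| ^ α₂) * exp (-b * |z.2| ^ α₂) :=
        integral_mono_of_nonneg (ae_of_all _ fun z => (exp_pos _).le)
          (integrable_exp_neg_mul_abs_rpow_mul_exp_neg_mul_abs_rpow hα₂ ha hb) (ae_of_all _ hpt)
    _ = _ := by
      rw [integral_exp_neg_mul_abs_rpow_mul_exp_neg_mul_abs_rpow hα₂ ha hb, hscale]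
      ring

/-- For `0 < α₁ < α₂ ≤ 1` there is `c > 0`, depending only on `α₁, α₂`,
such that for all `t ∈ (0, π/6]`,
`(1/(2π)²) ∫_{ℝ²} exp(−∫_{−t}^0 (|z₁ cos r − z₂ sin r|^{α₁} + |z₁ sin r + z₂ cos r|^{α₂}) dr) dz
   ≤ c t^{−1−2/α₂}`;
in particular this quantity divided by `t^{−1/α₁−1/α₂}` is at most `c t^{1/α₁ − 1/α₂ − 1}`. -/
theorem stmt19 (α₁ α₂ : ℝ) (h₁ : 0 < α₁) (h₁₂ : α₁ < α₂) (h₂ : α₂ ≤ 1) :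
    ∃ c > 0, ∀ t : ℝ, 0 < t → t ≤ π / 6 →
      (1 / (2 * π) ^ 2) *
        (∫ z : ℝ × ℝ, Real.exp (-(∫ r in (-t)..(0:ℝ),
          (|z.1 * Real.cos r - z.2 * Real.sin r| ^ α₁ +
           |z.1 * Real.sin r + z.2 * Real.cos r| ^ α₂))))
        ≤ c * t ^ (-1 - 2 / α₂)
      ∧ (1 / (2 * π) ^ 2) *
        (∫ z : ℝ × ℝ, Real.exp (-(∫ r in (-t)..(0:ℝ),
          (|z.1 * Real.cos r - z.2 * Real.sin r| ^ α₁ +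
           |z.1 * Real.sin r + z.2 * Real.cos r| ^ α₂))))
        / t ^ (-(1 / α₁) - 1 / α₂)
        ≤ c * t ^ (1 / α₁ - 1 / α₂ - 1) := by
  have hα₂ : 0 < α₂ := h₁.trans h₁₂
  have hΓ := Gamma_pos_of_pos (by positivity : 0 < 1 / α₂ + 1)
  set c := 1 / (2 * π) ^ 2 * (4 * 256 ^ (2 / α₂) * Gamma (1 / α₂ + 1) ^ 2)
  refine ⟨c, by positivity, fun t ht htπ => ?_⟩
  have hbound : (1 / (2 * π) ^ 2) * (∫ z : ℝ × ℝ, exp (-(∫ r in (-t)..(0:ℝ),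
      (|z.1 * cos r - z.2 * sin r| ^ α₁ + |z.1 * sin r + z.2 * cos r| ^ α₂)))) ≤
      c * t ^ (-1 - 2 / α₂) := by
    rw [mul_assoc]
    gcongr
    exact integral_exp_neg_integral_rotation_rpow_le h₁.le hα₂ h₂ ht
      (htπ.trans (by linarith [pi_le_four]))
  refine ⟨hbound, ?_⟩
  calc _ ≤ c * t ^ (-1 - 2 / α₂) / t ^ (-(1 / α₁) - 1 / α₂) := by gcongr
    _ = c * t ^ (1 / α₁ - 1 / α₂ - 1) := by rw [mul_div_assoc, ← rpow_sub ht]; ring_nf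
end
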